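/- arXiv:2401.10987 — 5 statements merged into one kernel-verified Lean document; each statement's English description precedes it below -/
import Mathlib

section
/- For a uniform probability distribution on the boundary of a regular hexagon with unit circumradius, if m ≥ 2 equally spaced points including both endpoints are placed on one side, the distortion error contributed by that side equals 1/(72(m−1)²). -/
open Real

private lemma hexMinSqIntegral (p q : ℝ) (hpq : p ≤ q) :
    ∫ x in p..q, min ((x - p) ^ 2) ((x - q) ^ 2) = (q - p) ^ 3 / 12 := by
  set mid := (p + q) / 2 with hmid
  have h1 : p ≤ mid := by rw [hmid]; linarith
  have h2 : mid ≤ q := by rw [hmid]; linarith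
  have hcont : Continuous fun x : ℝ => min ((x - p) ^ 2) ((x - q) ^ 2) := by fun_prop
  have key : ∀ c a b : ℝ, ∫ x in a..b, (x - c) ^ 2 = ((b - c) ^ 3 - (a - c) ^ 3) / 3 := by
    intro c a b
    rw [intervalIntegral.integral_comp_sub_right (fun x => x ^ 2) c, integral_pow]
    norm_num
  rw [← intervalIntegral.integral_add_adjacent_intervals
      (hcont.intervalIntegrable p mid) (hcont.intervalIntegrable mid q)]
  have e1 : ∫ x in p..mid, min ((x - p) ^ 2) ((x - q) ^ 2) = ∫ x in p..mid, (x - p) ^ 2 := by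
    apply intervalIntegral.integral_congr
    intro x hx
    rw [Set.uIcc_of_le h1] at hx
    have hx1 := hx.1
    have hx2 := hx.2
    rw [hmid] at hx2
    have h : (x - p) ^ 2 ≤ (x - q) ^ 2 := by
      have hq : (x - q) ^ 2 = (q - x) ^ 2 := by ring
      rw [hq]
      apply pow_le_pow_left₀ (by linarith) (by linarith)
    simp [min_eq_left h]
  have e2 : ∫ x in mid..q, min ((x - p) ^ 2) ((x - q) ^ 2) = ∫ x in mid..q, (x - q) ^ 2 := by
    apply intervalIntegral.integral_congr
    intro x hx
    rw [Set.uIcc_of_le h2] at hx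
    have hx1 := hx.1
    have hx2 := hx.2
    rw [hmid] at hx1
    have h : (x - q) ^ 2 ≤ (x - p) ^ 2 := by
      have hq : (x - q) ^ 2 = (q - x) ^ 2 := by ring
      rw [hq]
      apply pow_le_pow_left₀ (by linarith) (by linarith)
    simp [min_eq_right h]
  rw [e1, e2, key, key, hmid]
  ring

private lemma hexInfEqMin (m : ℕ) (hm : 2 ≤ m) (k : ℕ) (hk : k + 1 ≤ m - 1) (x : ℝ)
    (hx1 : -(1 / 2) + (k : ℝ) / ((m : ℝ) - 1) ≤ x)
    (hx2 : x ≤ -(1 / 2) + ((k : ℝ) + 1) / ((m : ℝ) - 1)) :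
    (⨅ j : Fin m, (x - (-(1 / 2) + (j : ℝ) / ((m : ℝ) - 1))) ^ 2)
      = min ((x - (-(1 / 2) + (k : ℝ) / ((m : ℝ) - 1))) ^ 2)
          ((x - (-(1 / 2) + ((k : ℝ) + 1) / ((m : ℝ) - 1))) ^ 2) := by
  have hN : (0 : ℝ) < (m : ℝ) - 1 := by
    have : (2 : ℝ) ≤ (m : ℝ) := by exact_mod_cast hm
    linarith
  haveI : Nonempty (Fin m) := ⟨⟨0, by omega⟩⟩
  have bdd : BddBelow (Set.range fun j : Fin m =>
      (x - (-(1 / 2) + (j : ℝ) / ((m : ℝ) - 1))) ^ 2) := by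
    refine ⟨0, ?_⟩
    rintro y ⟨j, rfl⟩
    positivity
  apply le_antisymm
  · apply le_min
    · have h := ciInf_le bdd (⟨k, by omega⟩ : Fin m)
      simpa using h
    · have h := ciInf_le bdd (⟨k + 1, by omega⟩ : Fin m)
      push_cast at h
      simpa using h
  · apply le_ciInf
    intro j
    rcases le_or_gt ((j : ℕ) : ℝ) (k : ℝ) with hj | hj
    · refine le_trans (min_le_left _ _) ?_
      have haj : -(1 / 2) + ((j : ℕ) : ℝ) / ((m : ℝ) - 1)
          ≤ -(1 / 2) + (k : ℝ) / ((m : ℝ) - 1) := by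
        gcongr
      apply pow_le_pow_left₀ (by linarith) (by linarith)
    · refine le_trans (min_le_right _ _) ?_
      have hjk : (k : ℝ) + 1 ≤ ((j : ℕ) : ℝ) := by
        have hj' : k < (j : ℕ) := by exact_mod_cast hj
        have : (k : ℕ) + 1 ≤ (j : ℕ) := hj'
        exact_mod_cast this
      have haj : -(1 / 2) + ((k : ℝ) + 1) / ((m : ℝ) - 1)
          ≤ -(1 / 2) + ((j : ℕ) : ℝ) / ((m : ℝ) - 1) := by
        gcongr
      have h1 : (x - (-(1 / 2) + ((k : ℝ) + 1) / ((m : ℝ) - 1))) ^ 2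
          = ((-(1 / 2) + ((k : ℝ) + 1) / ((m : ℝ) - 1)) - x) ^ 2 := by ring
      have h2 : (x - (-(1 / 2) + ((j : ℕ) : ℝ) / ((m : ℝ) - 1))) ^ 2
          = ((-(1 / 2) + ((j : ℕ) : ℝ) / ((m : ℝ) - 1)) - x) ^ 2 := by ring
      rw [h1, h2]
      apply pow_le_pow_left₀ (by linarith) (by linarith)

/-- For the uniform distribution (density `1/6` per unit arc length) on the boundary of the
regular hexagon with unit circumradius, `m ≥ 2` equally spaced points (including the endpoints)
on the bottom side `L₁` from `(−1/2, −√3/2)` to `(1/2, −√3/2)` contribute distortion error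
`1/(72(m−1)²)`. -/
theorem distortion_equally_spaced_hexagon_side (m : ℕ) (hm : 2 ≤ m) :
    (1 / 6 : ℝ) *
      ∫ x in (-(1 / 2) : ℝ)..(1 / 2 : ℝ),
        ⨅ j : Fin m,
          ((x - (-(1 / 2) + (j : ℝ) / ((m : ℝ) - 1))) ^ 2 +
            ((-(Real.sqrt 3 / 2)) - (-(Real.sqrt 3 / 2))) ^ 2)
    = 1 / (72 * ((m : ℝ) - 1) ^ 2) := by
  have hN : (0 : ℝ) < (m : ℝ) - 1 := by
    have : (2 : ℝ) ≤ (m : ℝ) := by exact_mod_cast hm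
    linarith
  have hcast : ((m - 1 : ℕ) : ℝ) = (m : ℝ) - 1 := by
    have : 1 ≤ m := by omega
    push_cast [this]
    ring
  simp only [sub_self, ne_eq, OfNat.ofNat_ne_zero, not_false_eq_true, zero_pow, add_zero]
  set c : ℕ → ℝ := fun k => -(1 / 2) + (k : ℝ) / ((m : ℝ) - 1) with hc
  have hcle : ∀ k : ℕ, c k ≤ c (k + 1) := by
    intro k
    simp only [hc]
    gcongr
    push_cast
    linarith
  set g : ℝ → ℝ := fun x => ⨅ j : Fin m, (x - (-(1 / 2) + (j : ℝ) / ((m : ℝ) - 1))) ^ 2 with hg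
  have hcs : ∀ i : ℕ, c (i + 1) = -(1 / 2) + ((i : ℝ) + 1) / ((m : ℝ) - 1) := by
    intro i
    simp only [hc]
    push_cast
    ring
  have hgeq : ∀ i, i + 1 ≤ m - 1 → Set.EqOn g
      (fun x => min ((x - c i) ^ 2) ((x - c (i + 1)) ^ 2)) (Set.Icc (c i) (c (i + 1))) := by
    intro i hi x hx
    have hx1' : -(1 / 2) + (i : ℝ) / ((m : ℝ) - 1) ≤ x := hx.1
    have hx2' : x ≤ -(1 / 2) + ((i : ℝ) + 1) / ((m : ℝ) - 1) := by
      rw [← hcs i]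
      exact hx.2
    have h := hexInfEqMin m hm i hi x hx1' hx2'
    show g x = min ((x - c i) ^ 2) ((x - c (i + 1)) ^ 2)
    rw [hcs i]
    exact h
  have hint : ∀ i, i < m - 1 → IntervalIntegrable g MeasureTheory.volume (c i) (c (i + 1)) := by
    intro i hi
    have hcont : Continuous fun x : ℝ => min ((x - c i) ^ 2) ((x - c (i + 1)) ^ 2) := by fun_prop
    have h0 : IntervalIntegrable (fun x : ℝ => min ((x - c i) ^ 2) ((x - c (i + 1)) ^ 2))
        MeasureTheory.volume (c i) (c (i + 1)) := hcont.intervalIntegrable _ _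
    rw [intervalIntegrable_iff] at h0 ⊢
    refine h0.congr_fun ?_ measurableSet_uIoc
    intro x hx
    rw [Set.uIoc_of_le (hcle i)] at hx
    exact (hgeq i (by omega) (Set.Ioc_subset_Icc_self hx)).symm
  have heach : ∀ i ∈ Finset.range (m - 1),
      (∫ x in c i..c (i + 1), g x) = (1 / ((m : ℝ) - 1)) ^ 3 / 12 := by
    intro i hi
    rw [Finset.mem_range] at hi
    have e : (∫ x in c i..c (i + 1), g x)
        = ∫ x in c i..c (i + 1), min ((x - c i) ^ 2) ((x - c (i + 1)) ^ 2) := by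
      apply intervalIntegral.integral_congr
      rw [Set.uIcc_of_le (hcle i)]
      exact hgeq i (by omega)
    rw [e, hexMinSqIntegral _ _ (hcle i)]
    have hd : c (i + 1) - c i = 1 / ((m : ℝ) - 1) := by
      rw [hcs i]
      simp only [hc]
      ring
    rw [hd]
  have hsum := intervalIntegral.sum_integral_adjacent_intervals (μ := MeasureTheory.volume)
      (a := c) (n := m - 1) (fun i hi => hint i hi)
  have hc0 : c 0 = -(1 / 2) := by simp [hc]
  have hcn : c (m - 1) = 1 / 2 := by
    simp only [hc, hcast]
    field_simp
    norm_num
  have : (∫ x in (-(1 / 2) : ℝ)..(1 / 2 : ℝ), g x)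
      = ((m : ℝ) - 1) * ((1 / ((m : ℝ) - 1)) ^ 3 / 12) := by
    rw [← hc0, ← hcn, ← hsum, Finset.sum_congr rfl heach, Finset.sum_const, Finset.card_range,
      nsmul_eq_mul, hcast]
  rw [show (∫ x in (-(1 / 2) : ℝ)..(1 / 2 : ℝ),
      ⨅ j : Fin m, (x - (-(1 / 2) + (j : ℝ) / ((m : ℝ) - 1))) ^ 2)
      = ∫ x in (-(1 / 2) : ℝ)..(1 / 2 : ℝ), g x from rfl, this]
  field_simp
  ring
end

section
/- For the uniform distribution on the boundary of a regular hexagon inscribed in the unit circle with the six vertices as conditional set, the conditional quantization errors are V_6 = 1/12, V_7 = 7/96, V_8 = 1/16, and V_9 = 5/96. -/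
open Real

noncomputable section

/-- Squared Euclidean distance in the plane. -/
def sqDist (p q : ℝ × ℝ) : ℝ := (p.1 - q.1) ^ 2 + (p.2 - q.2) ^ 2

/-- Vertices of the regular hexagon inscribed in the unit circle. -/
def hexVtx : Fin 6 → ℝ × ℝ :=
  ![(-(1 / 2), -(Real.sqrt 3 / 2)), (1 / 2, -(Real.sqrt 3 / 2)), (1, 0),
    (1 / 2, Real.sqrt 3 / 2), (-(1 / 2), Real.sqrt 3 / 2), (-1, 0)]

/-- Distortion error of a set `γ` for the uniform distribution on the hexagon boundary:
each side has length `1` and the density per unit arc length is `1/6`. -/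
def hexError (γ : Set (ℝ × ℝ)) : ℝ :=
  ∑ j : Fin 6, (1 / 6 : ℝ) *
    ∫ t in (0 : ℝ)..1,
      sInf ((fun a => sqDist ((1 - t) • hexVtx j + t • hexVtx (j + 1)) a) '' γ)

/-- The conditional set: the six vertices of the hexagon. -/
def hexβ : Set (ℝ × ℝ) := Set.range hexVtx

/-- The `n`-th conditional (unconstrained) quantization error for the uniform distribution on
the hexagon boundary with the six vertices as conditional set. -/
def condV (n : ℕ) : ℝ :=
  sInf ((fun α : Set (ℝ × ℝ) => hexError (α ∪ hexβ)) ''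
    {α : Set (ℝ × ℝ) | α.Finite ∧ α.ncard ≤ n - 6})

open intervalIntegral MeasureTheory


def SP (p q : ℝ × ℝ) (t : ℝ) : ℝ × ℝ := (1 - t) • p + t • q

def sig (p q b : ℝ × ℝ) : ℝ := (b.1 - p.1) * (q.1 - p.1) + (b.2 - p.2) * (q.2 - p.2)

lemma sqDist_nonneg (p q : ℝ × ℝ) : 0 ≤ sqDist p q := by
  unfold sqDist; positivity

lemma sqDist_SP (p q b : ℝ × ℝ) (t : ℝ) :
    sqDist (SP p q t) b = sqDist p q * t ^ 2 - 2 * t * sig p q b + sqDist p b := by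
  simp only [sqDist, SP, sig, Prod.fst_add, Prod.snd_add, Prod.smul_fst, Prod.smul_snd,
    smul_eq_mul]
  ring

lemma sqDist_SP_self (p q : ℝ × ℝ) (hpq : sqDist p q = 1) (t s : ℝ) :
    sqDist (SP p q t) (SP p q s) = (t - s) ^ 2 := by
  have h : sqDist (SP p q t) (SP p q s) = sqDist p q * (t - s) ^ 2 := by
    simp only [sqDist, SP, Prod.fst_add, Prod.snd_add, Prod.smul_fst, Prod.smul_snd,
      smul_eq_mul]
    ring
  rw [h, hpq, one_mul]

lemma sig_sq_le (p q b : ℝ × ℝ) (hpq : sqDist p q = 1) :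
    sig p q b ^ 2 ≤ sqDist p b := by
  have key : sig p q b ^ 2 + ((b.1 - p.1) * (q.2 - p.2) - (b.2 - p.2) * (q.1 - p.1)) ^ 2
      = sqDist p b * sqDist p q := by
    simp only [sqDist, sig]; ring
  nlinarith [sq_nonneg ((b.1 - p.1) * (q.2 - p.2) - (b.2 - p.2) * (q.1 - p.1))]

lemma u_eq_mid (p q b : ℝ × ℝ) :
    sig p q b - sqDist p b = sqDist p q / 4 - sqDist (SP p q (1/2)) b := by
  simp only [sqDist, sig, SP, Prod.fst_add, Prod.snd_add, Prod.smul_fst, Prod.smul_snd,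
    smul_eq_mul]
  ring

lemma cont_sqDist_SP (p q b : ℝ × ℝ) : Continuous (fun t => sqDist (SP p q t) b) := by
  simp only [sqDist, SP, Prod.fst_add, Prod.snd_add, Prod.smul_fst, Prod.smul_snd, smul_eq_mul]
  continuity

def m2 (t : ℝ) : ℝ := min (t ^ 2) ((1 - t) ^ 2)

lemma m2_cont : Continuous m2 := by
  unfold m2; continuity

lemma m2_le_quarter {t : ℝ} (ht : t ∈ Set.Icc (0:ℝ) 1) : m2 t ≤ 1/4 := by
  rcases le_total t (1/2) with h | h
  · calc m2 t ≤ t ^ 2 := min_le_left _ _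
      _ ≤ 1/4 := by nlinarith [ht.1]
  · calc m2 t ≤ (1-t) ^ 2 := min_le_right _ _
      _ ≤ 1/4 := by nlinarith [ht.2]


lemma integral_sq_shift (a b c : ℝ) :
    ∫ t in a..b, (t - c) ^ 2 = ((b - c) ^ 3 - (a - c) ^ 3) / 3 := by
  have h : ∀ t ∈ Set.uIcc a b, HasDerivAt (fun t => (t - c) ^ 3 / 3) ((t - c) ^ 2) t := by
    intro t _
    have : HasDerivAt (fun t : ℝ => (t - c) ^ 3 / 3) ((3 * (t - c) ^ 2 * 1) / 3) t := by
      exact (((hasDerivAt_id t).sub_const c).pow 3).div_const 3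
    simpa using this
  rw [integral_eq_sub_of_hasDerivAt h
    ((by continuity : Continuous fun t : ℝ => (t - c)^2).intervalIntegrable _ _)]
  ring

lemma integral_linear (a b c w : ℝ) :
    ∫ t in a..b, (2 * c * t - w) = c * b ^ 2 - w * b - (c * a ^ 2 - w * a) := by
  have h : ∀ t ∈ Set.uIcc a b, HasDerivAt (fun t => c * t ^ 2 - w * t) (2 * c * t - w) t := by
    intro t _
    have h1 : HasDerivAt (fun t : ℝ => c * t ^ 2 - w * t) (c * (↑2 * t ^ 1) - w * 1) t :=
      ((hasDerivAt_pow 2 t).const_mul c).sub ((hasDerivAt_id t).const_mul w)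
    have h2 : c * (↑2 * t ^ 1) - w * 1 = 2 * c * t - w := by push_cast; ring
    rwa [h2] at h1
  rw [integral_eq_sub_of_hasDerivAt h
    ((by continuity : Continuous fun t : ℝ => 2*c*t - w).intervalIntegrable _ _)]

lemma cont_max0 {f : ℝ → ℝ} (hf : Continuous f) : Continuous (fun t => max 0 (f t)) :=
  continuous_const.max hf

-- key 1D bound
lemma L1 (c w : ℝ) (hw : 0 ≤ w) :
    ∫ t in (0:ℝ)..(1/2), max 0 (2 * c * t - w) ≤ max 0 (c - w) ^ 2 / (4 * c) := by
  have hzero : ∀ x : ℝ, (0:ℝ) ≤ x → (∀ t ∈ Set.Icc (0:ℝ) x, 2 * c * t - w ≤ 0) →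
      ∫ t in (0:ℝ)..x, max 0 (2 * c * t - w) = 0 := by
    intro x hx hneg
    have hz : ∫ t in (0:ℝ)..x, max 0 (2 * c * t - w) = ∫ t in (0:ℝ)..x, (0:ℝ) := by
      apply integral_congr
      intro t ht
      rw [Set.uIcc_of_le hx] at ht
      simp [max_eq_left (hneg t ht)]
    rw [hz, intervalIntegral.integral_zero]
  rcases le_or_gt c 0 with hc | hc
  · rw [hzero (1/2) (by norm_num) (fun t ht => by nlinarith [ht.1, ht.2]),
      max_eq_left (by linarith : c - w ≤ 0)]
    simp
  · rcases le_or_gt c w with hcw | hcw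
    · rw [hzero (1/2) (by norm_num) (fun t ht => by nlinarith [ht.1, ht.2])]
      positivity
    · set t0 : ℝ := w / (2 * c) with ht0
      have h2c : 0 < 2 * c := by linarith
      have h3 : 2 * c * t0 = w := by rw [ht0]; field_simp
      have ht00 : 0 ≤ t0 := by positivity
      have ht05 : t0 ≤ 1/2 := by rw [ht0, div_le_iff₀ h2c]; linarith
      have hcont : Continuous (fun t : ℝ => max 0 (2 * c * t - w)) :=
        cont_max0 (by continuity)
      have hsplit : (∫ t in (0:ℝ)..t0, max 0 (2 * c * t - w)) +
          (∫ t in t0..(1/2), max 0 (2 * c * t - w)) = ∫ t in (0:ℝ)..(1/2), max 0 (2 * c * t - w) :=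
        integral_add_adjacent_intervals (hcont.intervalIntegrable _ _) (hcont.intervalIntegrable _ _)
      have h1 : ∫ t in (0:ℝ)..t0, max 0 (2 * c * t - w) = 0 :=
        hzero t0 ht00 (fun t ht => by nlinarith [ht.2])
      have h2 : ∫ t in t0..(1/2), max 0 (2 * c * t - w) = ∫ t in t0..(1/2), (2 * c * t - w) := by
        apply integral_congr
        intro t ht
        rw [Set.uIcc_of_le ht05] at ht
        have h4 : 2 * c * t0 ≤ 2 * c * t := by nlinarith [ht.1]
        simp [max_eq_right (by linarith : (0:ℝ) ≤ 2 * c * t - w)]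
      have h5 : ∫ t in t0..(1/2), (2 * c * t - w) = (c - w) ^ 2 / (4 * c) := by
        rw [integral_linear]
        rw [ht0]; field_simp
        ring
      have hm : max 0 (c - w) = c - w := max_eq_right (by linarith)
      rw [← hsplit, h1, h2, h5, hm, zero_add]


lemma rho_eq (p q b : ℝ × ℝ) : sqDist q b = sqDist p b - 2 * sig p q b + sqDist p q := by
  simp only [sqDist, sig]; ring

lemma side_imp (p q b : ℝ × ℝ) (hpq : sqDist p q = 1) :
    ∫ t in (0:ℝ)..1, max 0 (m2 t - sqDist (SP p q t) b)
      ≤ max 0 (sig p q b - sqDist p b) / 4 := by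
  set σ := sig p q b with hσdef
  set R := sqDist p b with hRdef
  have hR0 : 0 ≤ R := sqDist_nonneg _ _
  have hRσ : σ ^ 2 ≤ R := sig_sq_le p q b hpq
  have hρ : sqDist q b = R - 2 * σ + 1 := by rw [rho_eq p q b, hpq]
  have hρ0 : 0 ≤ R - 2 * σ + 1 := by rw [← hρ]; exact sqDist_nonneg _ _
  have hcont : Continuous (fun t => max 0 (m2 t - sqDist (SP p q t) b)) :=
    cont_max0 (m2_cont.sub (cont_sqDist_SP p q b))
  have hsplit : (∫ t in (0:ℝ)..(1/2), max 0 (m2 t - sqDist (SP p q t) b)) +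
      (∫ t in (1/2:ℝ)..1, max 0 (m2 t - sqDist (SP p q t) b))
      = ∫ t in (0:ℝ)..1, max 0 (m2 t - sqDist (SP p q t) b) :=
    integral_add_adjacent_intervals (hcont.intervalIntegrable _ _) (hcont.intervalIntegrable _ _)
  have h1 : ∫ t in (0:ℝ)..(1/2), max 0 (m2 t - sqDist (SP p q t) b)
      = ∫ t in (0:ℝ)..(1/2), max 0 (2 * σ * t - R) := by
    apply integral_congr
    intro t ht
    rw [Set.uIcc_of_le (by norm_num)] at ht
    have hm : m2 t = t ^ 2 := min_eq_left (by nlinarith [ht.1, ht.2])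
    simp only
    rw [hm, sqDist_SP, hpq]
    ring_nf
    rfl
  have h2 : ∫ t in (1/2:ℝ)..1, max 0 (m2 t - sqDist (SP p q t) b)
      = ∫ t in (1/2:ℝ)..1, (fun u => max 0 (2 * (1 - σ) * u - (R - 2 * σ + 1))) (1 - t) := by
    apply integral_congr
    intro t ht
    rw [Set.uIcc_of_le (by norm_num)] at ht
    have hm : m2 t = (1 - t) ^ 2 := min_eq_right (by nlinarith [ht.1, ht.2])
    simp only
    rw [hm, sqDist_SP, hpq]
    ring_nf
    rfl
  have h3 : ∫ t in (1/2:ℝ)..1, (fun u => max 0 (2 * (1 - σ) * u - (R - 2 * σ + 1))) (1 - t)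
      = ∫ u in (0:ℝ)..(1/2), max 0 (2 * (1 - σ) * u - (R - 2 * σ + 1)) := by
    rw [integral_comp_sub_left (fun u => max 0 (2 * (1 - σ) * u - (R - 2 * σ + 1))) 1]
    norm_num
  have hL1 : ∫ t in (0:ℝ)..(1/2), max 0 (2 * σ * t - R) ≤ max 0 (σ - R) ^ 2 / (4 * σ) :=
    L1 σ R hR0
  have hL2 : ∫ u in (0:ℝ)..(1/2), max 0 (2 * (1 - σ) * u - (R - 2 * σ + 1))
      ≤ max 0 (σ - R) ^ 2 / (4 * (1 - σ)) := by
    have := L1 (1 - σ) (R - 2 * σ + 1) hρ0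
    have he : (1 - σ) - (R - 2 * σ + 1) = σ - R := by ring
    rwa [he] at this
  have hfinal : max 0 (σ - R) ^ 2 / (4 * σ) + max 0 (σ - R) ^ 2 / (4 * (1 - σ))
      ≤ max 0 (σ - R) / 4 := by
    rcases le_or_gt (σ - R) 0 with hu | hu
    · rw [max_eq_left hu]
      simp
    · rw [max_eq_right hu.le]
      have hu2 : σ - R ≤ σ - σ ^ 2 := by linarith
      have hσ0 : 0 < σ := by nlinarith
      have hσ1 : σ < 1 := by nlinarith
      have d1 : (4:ℝ) * σ ≠ 0 := by positivity
      have d2 : (4:ℝ) * (1 - σ) ≠ 0 := by nlinarith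
      rw [div_add_div _ _ d1 d2, div_le_div_iff₀ (by nlinarith) (by norm_num)]
      nlinarith [sq_nonneg (σ - R), hu2, hσ0, hσ1,
        mul_pos hσ0 (by linarith : (0:ℝ) < 1 - σ)]
  calc ∫ t in (0:ℝ)..1, max 0 (m2 t - sqDist (SP p q t) b)
      = _ + _ := hsplit.symm
    _ ≤ max 0 (σ - R) ^ 2 / (4 * σ) + max 0 (σ - R) ^ 2 / (4 * (1 - σ)) := by
        rw [h1, h2, h3]; exact add_le_add hL1 hL2
    _ ≤ max 0 (σ - R) / 4 := hfinal


lemma cont_inf' (F : ℝ → (ℝ × ℝ) → ℝ) (hF : ∀ a, Continuous (fun t => F t a)) :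
    ∀ (s : Finset (ℝ × ℝ)) (h : s.Nonempty),
      Continuous (fun t => s.inf' h (fun a => F t a)) := by
  intro s h
  induction h using Finset.Nonempty.cons_induction with
  | singleton a => simpa using hF a
  | cons a s ha hs ih =>
      have : (fun t => (Finset.cons a s ha).inf' (Finset.cons_nonempty ha)
          (fun x => F t x)) = fun t => min (F t a) (s.inf' hs (fun x => F t x)) := by
        funext t
        rw [Finset.inf'_cons]
      rw [this]
      exact (hF a).min (ih)

lemma cont_sInf (γ : Set (ℝ × ℝ)) (hfin : γ.Finite) (hne : γ.Nonempty)
    (F : ℝ → (ℝ × ℝ) → ℝ) (hF : ∀ a, Continuous (fun t => F t a)) :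
    Continuous (fun t => sInf ((F t) '' γ)) := by
  have hs : (hfin.toFinset : Set (ℝ × ℝ)) = γ := hfin.coe_toFinset
  have hne' : hfin.toFinset.Nonempty := by
    rw [← Finset.coe_nonempty, hs]; exact hne
  have : (fun t => sInf ((F t) '' γ)) = fun t => hfin.toFinset.inf' hne' (fun a => F t a) := by
    funext t
    rw [Finset.inf'_eq_csInf_image, hs]
  rw [this]
  exact cont_inf' F hF _ _

lemma sInf_eval {γ : Set (ℝ × ℝ)} (x : ℝ × ℝ) (c : ℝ) (a0 : ℝ × ℝ) (ha0 : a0 ∈ γ)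
    (h0 : sqDist x a0 = c) (hall : ∀ a ∈ γ, c ≤ sqDist x a) :
    sInf ((fun a => sqDist x a) '' γ) = c := by
  apply le_antisymm
  · exact csInf_le ⟨0, by rintro y ⟨a, _, rfl⟩; exact sqDist_nonneg _ _⟩
      ⟨a0, ha0, h0⟩
  · exact le_csInf ⟨_, Set.mem_image_of_mem _ ha0⟩ (by rintro y ⟨a, ha, rfl⟩; exact hall a ha)

lemma sInf_lb {γ : Set (ℝ × ℝ)} (hne : γ.Nonempty) (x : ℝ × ℝ) (c : ℝ)
    (hall : ∀ a ∈ γ, c ≤ sqDist x a) :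
    c ≤ sInf ((fun a => sqDist x a) '' γ) :=
  le_csInf (hne.image _) (by rintro y ⟨a, ha, rfl⟩; exact hall a ha)

set_option maxHeartbeats 2000000 in
lemma sum_max_le (u0 u1 u2 u3 u4 u5 : ℝ)
    (h0 : u0 ≤ 1/4) (h1 : u1 ≤ 1/4) (h2 : u2 ≤ 1/4) (h3 : u3 ≤ 1/4) (h4 : u4 ≤ 1/4)
    (h5 : u5 ≤ 1/4)
    (p01 : u0 + u1 ≤ 1/8) (p12 : u1 + u2 ≤ 1/8) (p23 : u2 + u3 ≤ 1/8) (p34 : u3 + u4 ≤ 1/8)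
    (p45 : u4 + u5 ≤ 1/8) (p50 : u5 + u0 ≤ 1/8)
    (q02 : u0 + u2 ≤ 0) (q03 : u0 + u3 ≤ 0) (q04 : u0 + u4 ≤ 0)
    (q13 : u1 + u3 ≤ 0) (q14 : u1 + u4 ≤ 0) (q15 : u1 + u5 ≤ 0)
    (q24 : u2 + u4 ≤ 0) (q25 : u2 + u5 ≤ 0) (q35 : u3 + u5 ≤ 0) :
    max 0 u0 + max 0 u1 + max 0 u2 + max 0 u3 + max 0 u4 + max 0 u5 ≤ 1/4 := by
  rcases max_choice 0 u0 with e0 | e0 <;> rcases max_choice 0 u1 with e1 | e1 <;>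
    rcases max_choice 0 u2 with e2 | e2 <;> rcases max_choice 0 u3 with e3 | e3 <;>
    rcases max_choice 0 u4 with e4 | e4 <;> rcases max_choice 0 u5 with e5 | e5 <;>
    rw [e0, e1, e2, e3, e4, e5] <;> linarith


def hexMid (j : Fin 6) : ℝ × ℝ := SP (hexVtx j) (hexVtx (j + 1)) (1/2)

lemma sqrt3_sq : Real.sqrt 3 ^ 2 = 3 := Real.sq_sqrt (by norm_num)

lemma par_bound (a c b : ℝ × ℝ) : sqDist a c / 2 ≤ sqDist a b + sqDist c b := by
  simp only [sqDist]
  nlinarith [sq_nonneg (a.1 + c.1 - 2 * b.1), sq_nonneg (a.2 + c.2 - 2 * b.2)]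

lemma hexVtx_0 : hexVtx 0 = (-(1 / 2), -(Real.sqrt 3 / 2)) := rfl

lemma hexVtx_1 : hexVtx 1 = (1 / 2, -(Real.sqrt 3 / 2)) := rfl

lemma hexVtx_2 : hexVtx 2 = ((1:ℝ), (0:ℝ)) := rfl

lemma hexVtx_3 : hexVtx 3 = (1 / 2, Real.sqrt 3 / 2) := rfl

lemma hexVtx_4 : hexVtx 4 = (-(1 / 2), Real.sqrt 3 / 2) := rfl

lemma hexVtx_5 : hexVtx 5 = ((-1:ℝ), (0:ℝ)) := rfl

lemma finAdd_0 : (0 + 1 : Fin 6) = 1 := rfl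

lemma finAdd_1 : (1 + 1 : Fin 6) = 2 := rfl

lemma finAdd_2 : (2 + 1 : Fin 6) = 3 := rfl

lemma finAdd_3 : (3 + 1 : Fin 6) = 4 := rfl

lemma finAdd_4 : (4 + 1 : Fin 6) = 5 := rfl

lemma finAdd_5 : (5 + 1 : Fin 6) = 0 := rfl

lemma hexSide_0 : sqDist (hexVtx 0) (hexVtx (0 + 1)) = 1 := by
  rw [finAdd_0, hexVtx_0, hexVtx_1]
  simp only [sqDist]
  linear_combination (0 : ℝ) * sqrt3_sq

lemma hexSide_1 : sqDist (hexVtx 1) (hexVtx (1 + 1)) = 1 := by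
  rw [finAdd_1, hexVtx_1, hexVtx_2]
  simp only [sqDist]
  linear_combination (1/4 : ℝ) * sqrt3_sq

lemma hexSide_2 : sqDist (hexVtx 2) (hexVtx (2 + 1)) = 1 := by
  rw [finAdd_2, hexVtx_2, hexVtx_3]
  simp only [sqDist]
  linear_combination (1/4 : ℝ) * sqrt3_sq

lemma hexSide_3 : sqDist (hexVtx 3) (hexVtx (3 + 1)) = 1 := by
  rw [finAdd_3, hexVtx_3, hexVtx_4]
  simp only [sqDist]
  linear_combination (0 : ℝ) * sqrt3_sq

lemma hexSide_4 : sqDist (hexVtx 4) (hexVtx (4 + 1)) = 1 := by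
  rw [finAdd_4, hexVtx_4, hexVtx_5]
  simp only [sqDist]
  linear_combination (1/4 : ℝ) * sqrt3_sq

lemma hexSide_5 : sqDist (hexVtx 5) (hexVtx (5 + 1)) = 1 := by
  rw [finAdd_5, hexVtx_5, hexVtx_0]
  simp only [sqDist]
  linear_combination (1/4 : ℝ) * sqrt3_sq

lemma hexSide : ∀ j : Fin 6, sqDist (hexVtx j) (hexVtx (j + 1)) = 1 := by
  intro j
  fin_cases j
  exacts [hexSide_0, hexSide_1, hexSide_2, hexSide_3, hexSide_4, hexSide_5]

lemma hexMid_0 : hexMid 0 = ((0 : ℝ), (-1/2 : ℝ) * Real.sqrt 3) := by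
  rw [hexMid, finAdd_0, hexVtx_0, hexVtx_1]
  simp only [SP, Prod.ext_iff, Prod.fst_add, Prod.snd_add, Prod.smul_fst, Prod.smul_snd,
    smul_eq_mul]
  constructor <;> ring

lemma hexMid_1 : hexMid 1 = ((3/4 : ℝ), (-1/4 : ℝ) * Real.sqrt 3) := by
  rw [hexMid, finAdd_1, hexVtx_1, hexVtx_2]
  simp only [SP, Prod.ext_iff, Prod.fst_add, Prod.snd_add, Prod.smul_fst, Prod.smul_snd,
    smul_eq_mul]
  constructor <;> ring

lemma hexMid_2 : hexMid 2 = ((3/4 : ℝ), (1/4 : ℝ) * Real.sqrt 3) := by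
  rw [hexMid, finAdd_2, hexVtx_2, hexVtx_3]
  simp only [SP, Prod.ext_iff, Prod.fst_add, Prod.snd_add, Prod.smul_fst, Prod.smul_snd,
    smul_eq_mul]
  constructor <;> ring

lemma hexMid_3 : hexMid 3 = ((0 : ℝ), (1/2 : ℝ) * Real.sqrt 3) := by
  rw [hexMid, finAdd_3, hexVtx_3, hexVtx_4]
  simp only [SP, Prod.ext_iff, Prod.fst_add, Prod.snd_add, Prod.smul_fst, Prod.smul_snd,
    smul_eq_mul]
  constructor <;> ring

lemma hexMid_4 : hexMid 4 = ((-3/4 : ℝ), (1/4 : ℝ) * Real.sqrt 3) := by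
  rw [hexMid, finAdd_4, hexVtx_4, hexVtx_5]
  simp only [SP, Prod.ext_iff, Prod.fst_add, Prod.snd_add, Prod.smul_fst, Prod.smul_snd,
    smul_eq_mul]
  constructor <;> ring

lemma hexMid_5 : hexMid 5 = ((-3/4 : ℝ), (-1/4 : ℝ) * Real.sqrt 3) := by
  rw [hexMid, finAdd_5, hexVtx_5, hexVtx_0]
  simp only [SP, Prod.ext_iff, Prod.fst_add, Prod.snd_add, Prod.smul_fst, Prod.smul_snd,
    smul_eq_mul]
  constructor <;> ring

lemma hexMidD_01 : sqDist (hexMid 0) (hexMid 1) = (3/4 : ℝ) := by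
  rw [hexMid_0, hexMid_1]
  simp only [sqDist]
  linear_combination (1/16 : ℝ) * sqrt3_sq

lemma hexMidD_02 : sqDist (hexMid 0) (hexMid 2) = (9/4 : ℝ) := by
  rw [hexMid_0, hexMid_2]
  simp only [sqDist]
  linear_combination (9/16 : ℝ) * sqrt3_sq

lemma hexMidD_03 : sqDist (hexMid 0) (hexMid 3) = (3 : ℝ) := by
  rw [hexMid_0, hexMid_3]
  simp only [sqDist]
  linear_combination (1 : ℝ) * sqrt3_sq

lemma hexMidD_04 : sqDist (hexMid 0) (hexMid 4) = (9/4 : ℝ) := by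
  rw [hexMid_0, hexMid_4]
  simp only [sqDist]
  linear_combination (9/16 : ℝ) * sqrt3_sq

lemma hexMidD_05 : sqDist (hexMid 0) (hexMid 5) = (3/4 : ℝ) := by
  rw [hexMid_0, hexMid_5]
  simp only [sqDist]
  linear_combination (1/16 : ℝ) * sqrt3_sq

lemma hexMidD_12 : sqDist (hexMid 1) (hexMid 2) = (3/4 : ℝ) := by
  rw [hexMid_1, hexMid_2]
  simp only [sqDist]
  linear_combination (1/4 : ℝ) * sqrt3_sq

lemma hexMidD_13 : sqDist (hexMid 1) (hexMid 3) = (9/4 : ℝ) := by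
  rw [hexMid_1, hexMid_3]
  simp only [sqDist]
  linear_combination (9/16 : ℝ) * sqrt3_sq

lemma hexMidD_14 : sqDist (hexMid 1) (hexMid 4) = (3 : ℝ) := by
  rw [hexMid_1, hexMid_4]
  simp only [sqDist]
  linear_combination (1/4 : ℝ) * sqrt3_sq

lemma hexMidD_15 : sqDist (hexMid 1) (hexMid 5) = (9/4 : ℝ) := by
  rw [hexMid_1, hexMid_5]
  simp only [sqDist]
  linear_combination (0 : ℝ) * sqrt3_sq

lemma hexMidD_23 : sqDist (hexMid 2) (hexMid 3) = (3/4 : ℝ) := by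
  rw [hexMid_2, hexMid_3]
  simp only [sqDist]
  linear_combination (1/16 : ℝ) * sqrt3_sq

lemma hexMidD_24 : sqDist (hexMid 2) (hexMid 4) = (9/4 : ℝ) := by
  rw [hexMid_2, hexMid_4]
  simp only [sqDist]
  linear_combination (0 : ℝ) * sqrt3_sq

lemma hexMidD_25 : sqDist (hexMid 2) (hexMid 5) = (3 : ℝ) := by
  rw [hexMid_2, hexMid_5]
  simp only [sqDist]
  linear_combination (1/4 : ℝ) * sqrt3_sq

lemma hexMidD_34 : sqDist (hexMid 3) (hexMid 4) = (3/4 : ℝ) := by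
  rw [hexMid_3, hexMid_4]
  simp only [sqDist]
  linear_combination (1/16 : ℝ) * sqrt3_sq

lemma hexMidD_35 : sqDist (hexMid 3) (hexMid 5) = (9/4 : ℝ) := by
  rw [hexMid_3, hexMid_5]
  simp only [sqDist]
  linear_combination (9/16 : ℝ) * sqrt3_sq

lemma hexMidD_45 : sqDist (hexMid 4) (hexMid 5) = (3/4 : ℝ) := by
  rw [hexMid_4, hexMid_5]
  simp only [sqDist]
  linear_combination (1/4 : ℝ) * sqrt3_sq

lemma geomG (b : ℝ × ℝ) :
    ∑ j : Fin 6, max 0 (sig (hexVtx j) (hexVtx (j + 1)) b - sqDist (hexVtx j) b) ≤ 1/4 := by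
  have key : ∀ j : Fin 6, sig (hexVtx j) (hexVtx (j + 1)) b - sqDist (hexVtx j) b
      = 1/4 - sqDist (hexMid j) b := by
    intro j
    rw [u_eq_mid, hexSide j, hexMid]
  rw [Fin.sum_univ_six]
  rw [key 0, key 1, key 2, key 3, key 4, key 5]
  have n0 := sqDist_nonneg (hexMid 0) b
  have n1 := sqDist_nonneg (hexMid 1) b
  have n2 := sqDist_nonneg (hexMid 2) b
  have n3 := sqDist_nonneg (hexMid 3) b
  have n4 := sqDist_nonneg (hexMid 4) b
  have n5 := sqDist_nonneg (hexMid 5) b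
  have b01 := par_bound (hexMid 0) (hexMid 1) b; rw [hexMidD_01] at b01
  have b12 := par_bound (hexMid 1) (hexMid 2) b; rw [hexMidD_12] at b12
  have b23 := par_bound (hexMid 2) (hexMid 3) b; rw [hexMidD_23] at b23
  have b34 := par_bound (hexMid 3) (hexMid 4) b; rw [hexMidD_34] at b34
  have b45 := par_bound (hexMid 4) (hexMid 5) b; rw [hexMidD_45] at b45
  have b05 := par_bound (hexMid 0) (hexMid 5) b; rw [hexMidD_05] at b05
  have b02 := par_bound (hexMid 0) (hexMid 2) b; rw [hexMidD_02] at b02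
  have b03 := par_bound (hexMid 0) (hexMid 3) b; rw [hexMidD_03] at b03
  have b04 := par_bound (hexMid 0) (hexMid 4) b; rw [hexMidD_04] at b04
  have b13 := par_bound (hexMid 1) (hexMid 3) b; rw [hexMidD_13] at b13
  have b14 := par_bound (hexMid 1) (hexMid 4) b; rw [hexMidD_14] at b14
  have b15 := par_bound (hexMid 1) (hexMid 5) b; rw [hexMidD_15] at b15
  have b24 := par_bound (hexMid 2) (hexMid 4) b; rw [hexMidD_24] at b24
  have b25 := par_bound (hexMid 2) (hexMid 5) b; rw [hexMidD_25] at b25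
  have b35 := par_bound (hexMid 3) (hexMid 5) b; rw [hexMidD_35] at b35
  refine sum_max_le _ _ _ _ _ _ ?_ ?_ ?_ ?_ ?_ ?_ ?_ ?_ ?_ ?_ ?_ ?_ ?_ ?_ ?_ ?_ ?_ ?_ ?_ ?_ ?_ <;> linarith

lemma VB_0_2 : ∀ t ∈ Set.Icc (0:ℝ) 1, 1/4 ≤ sqDist (SP (hexVtx 0) (hexVtx (0 + 1)) t) (hexVtx 2) := by
  intro t ht
  rw [finAdd_0, hexVtx_0, hexVtx_1, hexVtx_2]
  simp only [SP, sqDist, Prod.fst_add, Prod.snd_add, Prod.smul_fst, Prod.smul_snd, smul_eq_mul]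
  nlinarith [sqrt3_sq, ht.1, ht.2, sq_nonneg t, sq_nonneg (1 - t), sq_nonneg (2 - t),
    sq_nonneg (t + 1), mul_nonneg (by linarith [ht.2] : (0:ℝ) ≤ 1 - t) (by linarith [ht.2] : (0:ℝ) ≤ 2 - t),
    mul_nonneg ht.1 (by linarith [ht.1] : (0:ℝ) ≤ t + 1)]

lemma VB_0_3 : ∀ t ∈ Set.Icc (0:ℝ) 1, 1/4 ≤ sqDist (SP (hexVtx 0) (hexVtx (0 + 1)) t) (hexVtx 3) := by
  intro t ht
  rw [finAdd_0, hexVtx_0, hexVtx_1, hexVtx_3]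
  simp only [SP, sqDist, Prod.fst_add, Prod.snd_add, Prod.smul_fst, Prod.smul_snd, smul_eq_mul]
  nlinarith [sqrt3_sq, ht.1, ht.2, sq_nonneg t, sq_nonneg (1 - t), sq_nonneg (2 - t),
    sq_nonneg (t + 1), mul_nonneg (by linarith [ht.2] : (0:ℝ) ≤ 1 - t) (by linarith [ht.2] : (0:ℝ) ≤ 2 - t),
    mul_nonneg ht.1 (by linarith [ht.1] : (0:ℝ) ≤ t + 1)]

lemma VB_0_4 : ∀ t ∈ Set.Icc (0:ℝ) 1, 1/4 ≤ sqDist (SP (hexVtx 0) (hexVtx (0 + 1)) t) (hexVtx 4) := by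
  intro t ht
  rw [finAdd_0, hexVtx_0, hexVtx_1, hexVtx_4]
  simp only [SP, sqDist, Prod.fst_add, Prod.snd_add, Prod.smul_fst, Prod.smul_snd, smul_eq_mul]
  nlinarith [sqrt3_sq, ht.1, ht.2, sq_nonneg t, sq_nonneg (1 - t), sq_nonneg (2 - t),
    sq_nonneg (t + 1), mul_nonneg (by linarith [ht.2] : (0:ℝ) ≤ 1 - t) (by linarith [ht.2] : (0:ℝ) ≤ 2 - t),
    mul_nonneg ht.1 (by linarith [ht.1] : (0:ℝ) ≤ t + 1)]

lemma VB_0_5 : ∀ t ∈ Set.Icc (0:ℝ) 1, 1/4 ≤ sqDist (SP (hexVtx 0) (hexVtx (0 + 1)) t) (hexVtx 5) := by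
  intro t ht
  rw [finAdd_0, hexVtx_0, hexVtx_1, hexVtx_5]
  simp only [SP, sqDist, Prod.fst_add, Prod.snd_add, Prod.smul_fst, Prod.smul_snd, smul_eq_mul]
  nlinarith [sqrt3_sq, ht.1, ht.2, sq_nonneg t, sq_nonneg (1 - t), sq_nonneg (2 - t),
    sq_nonneg (t + 1), mul_nonneg (by linarith [ht.2] : (0:ℝ) ≤ 1 - t) (by linarith [ht.2] : (0:ℝ) ≤ 2 - t),
    mul_nonneg ht.1 (by linarith [ht.1] : (0:ℝ) ≤ t + 1)]

lemma VB_1_0 : ∀ t ∈ Set.Icc (0:ℝ) 1, 1/4 ≤ sqDist (SP (hexVtx 1) (hexVtx (1 + 1)) t) (hexVtx 0) := by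
  intro t ht
  rw [finAdd_1, hexVtx_1, hexVtx_2, hexVtx_0]
  simp only [SP, sqDist, Prod.fst_add, Prod.snd_add, Prod.smul_fst, Prod.smul_snd, smul_eq_mul]
  nlinarith [sqrt3_sq, ht.1, ht.2, sq_nonneg t, sq_nonneg (1 - t), sq_nonneg (2 - t),
    sq_nonneg (t + 1), mul_nonneg (by linarith [ht.2] : (0:ℝ) ≤ 1 - t) (by linarith [ht.2] : (0:ℝ) ≤ 2 - t),
    mul_nonneg ht.1 (by linarith [ht.1] : (0:ℝ) ≤ t + 1)]

lemma VB_1_3 : ∀ t ∈ Set.Icc (0:ℝ) 1, 1/4 ≤ sqDist (SP (hexVtx 1) (hexVtx (1 + 1)) t) (hexVtx 3) := by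
  intro t ht
  rw [finAdd_1, hexVtx_1, hexVtx_2, hexVtx_3]
  simp only [SP, sqDist, Prod.fst_add, Prod.snd_add, Prod.smul_fst, Prod.smul_snd, smul_eq_mul]
  nlinarith [sqrt3_sq, ht.1, ht.2, sq_nonneg t, sq_nonneg (1 - t), sq_nonneg (2 - t),
    sq_nonneg (t + 1), mul_nonneg (by linarith [ht.2] : (0:ℝ) ≤ 1 - t) (by linarith [ht.2] : (0:ℝ) ≤ 2 - t),
    mul_nonneg ht.1 (by linarith [ht.1] : (0:ℝ) ≤ t + 1)]

lemma VB_1_4 : ∀ t ∈ Set.Icc (0:ℝ) 1, 1/4 ≤ sqDist (SP (hexVtx 1) (hexVtx (1 + 1)) t) (hexVtx 4) := by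
  intro t ht
  rw [finAdd_1, hexVtx_1, hexVtx_2, hexVtx_4]
  simp only [SP, sqDist, Prod.fst_add, Prod.snd_add, Prod.smul_fst, Prod.smul_snd, smul_eq_mul]
  nlinarith [sqrt3_sq, ht.1, ht.2, sq_nonneg t, sq_nonneg (1 - t), sq_nonneg (2 - t),
    sq_nonneg (t + 1), mul_nonneg (by linarith [ht.2] : (0:ℝ) ≤ 1 - t) (by linarith [ht.2] : (0:ℝ) ≤ 2 - t),
    mul_nonneg ht.1 (by linarith [ht.1] : (0:ℝ) ≤ t + 1)]

lemma VB_1_5 : ∀ t ∈ Set.Icc (0:ℝ) 1, 1/4 ≤ sqDist (SP (hexVtx 1) (hexVtx (1 + 1)) t) (hexVtx 5) := by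
  intro t ht
  rw [finAdd_1, hexVtx_1, hexVtx_2, hexVtx_5]
  simp only [SP, sqDist, Prod.fst_add, Prod.snd_add, Prod.smul_fst, Prod.smul_snd, smul_eq_mul]
  nlinarith [sqrt3_sq, ht.1, ht.2, sq_nonneg t, sq_nonneg (1 - t), sq_nonneg (2 - t),
    sq_nonneg (t + 1), mul_nonneg (by linarith [ht.2] : (0:ℝ) ≤ 1 - t) (by linarith [ht.2] : (0:ℝ) ≤ 2 - t),
    mul_nonneg ht.1 (by linarith [ht.1] : (0:ℝ) ≤ t + 1)]

lemma VB_2_0 : ∀ t ∈ Set.Icc (0:ℝ) 1, 1/4 ≤ sqDist (SP (hexVtx 2) (hexVtx (2 + 1)) t) (hexVtx 0) := by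
  intro t ht
  rw [finAdd_2, hexVtx_2, hexVtx_3, hexVtx_0]
  simp only [SP, sqDist, Prod.fst_add, Prod.snd_add, Prod.smul_fst, Prod.smul_snd, smul_eq_mul]
  nlinarith [sqrt3_sq, ht.1, ht.2, sq_nonneg t, sq_nonneg (1 - t), sq_nonneg (2 - t),
    sq_nonneg (t + 1), mul_nonneg (by linarith [ht.2] : (0:ℝ) ≤ 1 - t) (by linarith [ht.2] : (0:ℝ) ≤ 2 - t),
    mul_nonneg ht.1 (by linarith [ht.1] : (0:ℝ) ≤ t + 1)]

lemma VB_2_1 : ∀ t ∈ Set.Icc (0:ℝ) 1, 1/4 ≤ sqDist (SP (hexVtx 2) (hexVtx (2 + 1)) t) (hexVtx 1) := by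
  intro t ht
  rw [finAdd_2, hexVtx_2, hexVtx_3, hexVtx_1]
  simp only [SP, sqDist, Prod.fst_add, Prod.snd_add, Prod.smul_fst, Prod.smul_snd, smul_eq_mul]
  nlinarith [sqrt3_sq, ht.1, ht.2, sq_nonneg t, sq_nonneg (1 - t), sq_nonneg (2 - t),
    sq_nonneg (t + 1), mul_nonneg (by linarith [ht.2] : (0:ℝ) ≤ 1 - t) (by linarith [ht.2] : (0:ℝ) ≤ 2 - t),
    mul_nonneg ht.1 (by linarith [ht.1] : (0:ℝ) ≤ t + 1)]

lemma VB_2_4 : ∀ t ∈ Set.Icc (0:ℝ) 1, 1/4 ≤ sqDist (SP (hexVtx 2) (hexVtx (2 + 1)) t) (hexVtx 4) := by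
  intro t ht
  rw [finAdd_2, hexVtx_2, hexVtx_3, hexVtx_4]
  simp only [SP, sqDist, Prod.fst_add, Prod.snd_add, Prod.smul_fst, Prod.smul_snd, smul_eq_mul]
  nlinarith [sqrt3_sq, ht.1, ht.2, sq_nonneg t, sq_nonneg (1 - t), sq_nonneg (2 - t),
    sq_nonneg (t + 1), mul_nonneg (by linarith [ht.2] : (0:ℝ) ≤ 1 - t) (by linarith [ht.2] : (0:ℝ) ≤ 2 - t),
    mul_nonneg ht.1 (by linarith [ht.1] : (0:ℝ) ≤ t + 1)]

lemma VB_2_5 : ∀ t ∈ Set.Icc (0:ℝ) 1, 1/4 ≤ sqDist (SP (hexVtx 2) (hexVtx (2 + 1)) t) (hexVtx 5) := by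
  intro t ht
  rw [finAdd_2, hexVtx_2, hexVtx_3, hexVtx_5]
  simp only [SP, sqDist, Prod.fst_add, Prod.snd_add, Prod.smul_fst, Prod.smul_snd, smul_eq_mul]
  nlinarith [sqrt3_sq, ht.1, ht.2, sq_nonneg t, sq_nonneg (1 - t), sq_nonneg (2 - t),
    sq_nonneg (t + 1), mul_nonneg (by linarith [ht.2] : (0:ℝ) ≤ 1 - t) (by linarith [ht.2] : (0:ℝ) ≤ 2 - t),
    mul_nonneg ht.1 (by linarith [ht.1] : (0:ℝ) ≤ t + 1)]

lemma VB_3_0 : ∀ t ∈ Set.Icc (0:ℝ) 1, 1/4 ≤ sqDist (SP (hexVtx 3) (hexVtx (3 + 1)) t) (hexVtx 0) := by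
  intro t ht
  rw [finAdd_3, hexVtx_3, hexVtx_4, hexVtx_0]
  simp only [SP, sqDist, Prod.fst_add, Prod.snd_add, Prod.smul_fst, Prod.smul_snd, smul_eq_mul]
  nlinarith [sqrt3_sq, ht.1, ht.2, sq_nonneg t, sq_nonneg (1 - t), sq_nonneg (2 - t),
    sq_nonneg (t + 1), mul_nonneg (by linarith [ht.2] : (0:ℝ) ≤ 1 - t) (by linarith [ht.2] : (0:ℝ) ≤ 2 - t),
    mul_nonneg ht.1 (by linarith [ht.1] : (0:ℝ) ≤ t + 1)]

lemma VB_3_1 : ∀ t ∈ Set.Icc (0:ℝ) 1, 1/4 ≤ sqDist (SP (hexVtx 3) (hexVtx (3 + 1)) t) (hexVtx 1) := by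
  intro t ht
  rw [finAdd_3, hexVtx_3, hexVtx_4, hexVtx_1]
  simp only [SP, sqDist, Prod.fst_add, Prod.snd_add, Prod.smul_fst, Prod.smul_snd, smul_eq_mul]
  nlinarith [sqrt3_sq, ht.1, ht.2, sq_nonneg t, sq_nonneg (1 - t), sq_nonneg (2 - t),
    sq_nonneg (t + 1), mul_nonneg (by linarith [ht.2] : (0:ℝ) ≤ 1 - t) (by linarith [ht.2] : (0:ℝ) ≤ 2 - t),
    mul_nonneg ht.1 (by linarith [ht.1] : (0:ℝ) ≤ t + 1)]

lemma VB_3_2 : ∀ t ∈ Set.Icc (0:ℝ) 1, 1/4 ≤ sqDist (SP (hexVtx 3) (hexVtx (3 + 1)) t) (hexVtx 2) := by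
  intro t ht
  rw [finAdd_3, hexVtx_3, hexVtx_4, hexVtx_2]
  simp only [SP, sqDist, Prod.fst_add, Prod.snd_add, Prod.smul_fst, Prod.smul_snd, smul_eq_mul]
  nlinarith [sqrt3_sq, ht.1, ht.2, sq_nonneg t, sq_nonneg (1 - t), sq_nonneg (2 - t),
    sq_nonneg (t + 1), mul_nonneg (by linarith [ht.2] : (0:ℝ) ≤ 1 - t) (by linarith [ht.2] : (0:ℝ) ≤ 2 - t),
    mul_nonneg ht.1 (by linarith [ht.1] : (0:ℝ) ≤ t + 1)]

lemma VB_3_5 : ∀ t ∈ Set.Icc (0:ℝ) 1, 1/4 ≤ sqDist (SP (hexVtx 3) (hexVtx (3 + 1)) t) (hexVtx 5) := by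
  intro t ht
  rw [finAdd_3, hexVtx_3, hexVtx_4, hexVtx_5]
  simp only [SP, sqDist, Prod.fst_add, Prod.snd_add, Prod.smul_fst, Prod.smul_snd, smul_eq_mul]
  nlinarith [sqrt3_sq, ht.1, ht.2, sq_nonneg t, sq_nonneg (1 - t), sq_nonneg (2 - t),
    sq_nonneg (t + 1), mul_nonneg (by linarith [ht.2] : (0:ℝ) ≤ 1 - t) (by linarith [ht.2] : (0:ℝ) ≤ 2 - t),
    mul_nonneg ht.1 (by linarith [ht.1] : (0:ℝ) ≤ t + 1)]

lemma VB_4_0 : ∀ t ∈ Set.Icc (0:ℝ) 1, 1/4 ≤ sqDist (SP (hexVtx 4) (hexVtx (4 + 1)) t) (hexVtx 0) := by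
  intro t ht
  rw [finAdd_4, hexVtx_4, hexVtx_5, hexVtx_0]
  simp only [SP, sqDist, Prod.fst_add, Prod.snd_add, Prod.smul_fst, Prod.smul_snd, smul_eq_mul]
  nlinarith [sqrt3_sq, ht.1, ht.2, sq_nonneg t, sq_nonneg (1 - t), sq_nonneg (2 - t),
    sq_nonneg (t + 1), mul_nonneg (by linarith [ht.2] : (0:ℝ) ≤ 1 - t) (by linarith [ht.2] : (0:ℝ) ≤ 2 - t),
    mul_nonneg ht.1 (by linarith [ht.1] : (0:ℝ) ≤ t + 1)]

lemma VB_4_1 : ∀ t ∈ Set.Icc (0:ℝ) 1, 1/4 ≤ sqDist (SP (hexVtx 4) (hexVtx (4 + 1)) t) (hexVtx 1) := by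
  intro t ht
  rw [finAdd_4, hexVtx_4, hexVtx_5, hexVtx_1]
  simp only [SP, sqDist, Prod.fst_add, Prod.snd_add, Prod.smul_fst, Prod.smul_snd, smul_eq_mul]
  nlinarith [sqrt3_sq, ht.1, ht.2, sq_nonneg t, sq_nonneg (1 - t), sq_nonneg (2 - t),
    sq_nonneg (t + 1), mul_nonneg (by linarith [ht.2] : (0:ℝ) ≤ 1 - t) (by linarith [ht.2] : (0:ℝ) ≤ 2 - t),
    mul_nonneg ht.1 (by linarith [ht.1] : (0:ℝ) ≤ t + 1)]

lemma VB_4_2 : ∀ t ∈ Set.Icc (0:ℝ) 1, 1/4 ≤ sqDist (SP (hexVtx 4) (hexVtx (4 + 1)) t) (hexVtx 2) := by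
  intro t ht
  rw [finAdd_4, hexVtx_4, hexVtx_5, hexVtx_2]
  simp only [SP, sqDist, Prod.fst_add, Prod.snd_add, Prod.smul_fst, Prod.smul_snd, smul_eq_mul]
  nlinarith [sqrt3_sq, ht.1, ht.2, sq_nonneg t, sq_nonneg (1 - t), sq_nonneg (2 - t),
    sq_nonneg (t + 1), mul_nonneg (by linarith [ht.2] : (0:ℝ) ≤ 1 - t) (by linarith [ht.2] : (0:ℝ) ≤ 2 - t),
    mul_nonneg ht.1 (by linarith [ht.1] : (0:ℝ) ≤ t + 1)]

lemma VB_4_3 : ∀ t ∈ Set.Icc (0:ℝ) 1, 1/4 ≤ sqDist (SP (hexVtx 4) (hexVtx (4 + 1)) t) (hexVtx 3) := by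
  intro t ht
  rw [finAdd_4, hexVtx_4, hexVtx_5, hexVtx_3]
  simp only [SP, sqDist, Prod.fst_add, Prod.snd_add, Prod.smul_fst, Prod.smul_snd, smul_eq_mul]
  nlinarith [sqrt3_sq, ht.1, ht.2, sq_nonneg t, sq_nonneg (1 - t), sq_nonneg (2 - t),
    sq_nonneg (t + 1), mul_nonneg (by linarith [ht.2] : (0:ℝ) ≤ 1 - t) (by linarith [ht.2] : (0:ℝ) ≤ 2 - t),
    mul_nonneg ht.1 (by linarith [ht.1] : (0:ℝ) ≤ t + 1)]

lemma VB_5_1 : ∀ t ∈ Set.Icc (0:ℝ) 1, 1/4 ≤ sqDist (SP (hexVtx 5) (hexVtx (5 + 1)) t) (hexVtx 1) := by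
  intro t ht
  rw [finAdd_5, hexVtx_5, hexVtx_0, hexVtx_1]
  simp only [SP, sqDist, Prod.fst_add, Prod.snd_add, Prod.smul_fst, Prod.smul_snd, smul_eq_mul]
  nlinarith [sqrt3_sq, ht.1, ht.2, sq_nonneg t, sq_nonneg (1 - t), sq_nonneg (2 - t),
    sq_nonneg (t + 1), mul_nonneg (by linarith [ht.2] : (0:ℝ) ≤ 1 - t) (by linarith [ht.2] : (0:ℝ) ≤ 2 - t),
    mul_nonneg ht.1 (by linarith [ht.1] : (0:ℝ) ≤ t + 1)]

lemma VB_5_2 : ∀ t ∈ Set.Icc (0:ℝ) 1, 1/4 ≤ sqDist (SP (hexVtx 5) (hexVtx (5 + 1)) t) (hexVtx 2) := by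
  intro t ht
  rw [finAdd_5, hexVtx_5, hexVtx_0, hexVtx_2]
  simp only [SP, sqDist, Prod.fst_add, Prod.snd_add, Prod.smul_fst, Prod.smul_snd, smul_eq_mul]
  nlinarith [sqrt3_sq, ht.1, ht.2, sq_nonneg t, sq_nonneg (1 - t), sq_nonneg (2 - t),
    sq_nonneg (t + 1), mul_nonneg (by linarith [ht.2] : (0:ℝ) ≤ 1 - t) (by linarith [ht.2] : (0:ℝ) ≤ 2 - t),
    mul_nonneg ht.1 (by linarith [ht.1] : (0:ℝ) ≤ t + 1)]

lemma VB_5_3 : ∀ t ∈ Set.Icc (0:ℝ) 1, 1/4 ≤ sqDist (SP (hexVtx 5) (hexVtx (5 + 1)) t) (hexVtx 3) := by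
  intro t ht
  rw [finAdd_5, hexVtx_5, hexVtx_0, hexVtx_3]
  simp only [SP, sqDist, Prod.fst_add, Prod.snd_add, Prod.smul_fst, Prod.smul_snd, smul_eq_mul]
  nlinarith [sqrt3_sq, ht.1, ht.2, sq_nonneg t, sq_nonneg (1 - t), sq_nonneg (2 - t),
    sq_nonneg (t + 1), mul_nonneg (by linarith [ht.2] : (0:ℝ) ≤ 1 - t) (by linarith [ht.2] : (0:ℝ) ≤ 2 - t),
    mul_nonneg ht.1 (by linarith [ht.1] : (0:ℝ) ≤ t + 1)]

lemma VB_5_4 : ∀ t ∈ Set.Icc (0:ℝ) 1, 1/4 ≤ sqDist (SP (hexVtx 5) (hexVtx (5 + 1)) t) (hexVtx 4) := by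
  intro t ht
  rw [finAdd_5, hexVtx_5, hexVtx_0, hexVtx_4]
  simp only [SP, sqDist, Prod.fst_add, Prod.snd_add, Prod.smul_fst, Prod.smul_snd, smul_eq_mul]
  nlinarith [sqrt3_sq, ht.1, ht.2, sq_nonneg t, sq_nonneg (1 - t), sq_nonneg (2 - t),
    sq_nonneg (t + 1), mul_nonneg (by linarith [ht.2] : (0:ℝ) ≤ 1 - t) (by linarith [ht.2] : (0:ℝ) ≤ 2 - t),
    mul_nonneg ht.1 (by linarith [ht.1] : (0:ℝ) ≤ t + 1)]

lemma MB_0_1 : ∀ t ∈ Set.Icc (0:ℝ) 1, 1/4 ≤ sqDist (SP (hexVtx 0) (hexVtx (0 + 1)) t) (hexMid 1) := by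
  intro t ht
  rw [finAdd_0, hexVtx_0, hexVtx_1, hexMid_1]
  simp only [SP, sqDist, Prod.fst_add, Prod.snd_add, Prod.smul_fst, Prod.smul_snd, smul_eq_mul]
  nlinarith [sqrt3_sq, ht.1, ht.2, sq_nonneg t, sq_nonneg (1 - t), sq_nonneg (2 - t),
    sq_nonneg (t + 1), mul_nonneg (by linarith [ht.2] : (0:ℝ) ≤ 1 - t) (by linarith [ht.2] : (0:ℝ) ≤ 2 - t),
    mul_nonneg ht.1 (by linarith [ht.1] : (0:ℝ) ≤ t + 1)]

lemma MB_0_3 : ∀ t ∈ Set.Icc (0:ℝ) 1, 1/4 ≤ sqDist (SP (hexVtx 0) (hexVtx (0 + 1)) t) (hexMid 3) := by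
  intro t ht
  rw [finAdd_0, hexVtx_0, hexVtx_1, hexMid_3]
  simp only [SP, sqDist, Prod.fst_add, Prod.snd_add, Prod.smul_fst, Prod.smul_snd, smul_eq_mul]
  nlinarith [sqrt3_sq, ht.1, ht.2, sq_nonneg t, sq_nonneg (1 - t), sq_nonneg (2 - t),
    sq_nonneg (t + 1), mul_nonneg (by linarith [ht.2] : (0:ℝ) ≤ 1 - t) (by linarith [ht.2] : (0:ℝ) ≤ 2 - t),
    mul_nonneg ht.1 (by linarith [ht.1] : (0:ℝ) ≤ t + 1)]

lemma MB_1_0 : ∀ t ∈ Set.Icc (0:ℝ) 1, 1/4 ≤ sqDist (SP (hexVtx 1) (hexVtx (1 + 1)) t) (hexMid 0) := by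
  intro t ht
  rw [finAdd_1, hexVtx_1, hexVtx_2, hexMid_0]
  simp only [SP, sqDist, Prod.fst_add, Prod.snd_add, Prod.smul_fst, Prod.smul_snd, smul_eq_mul]
  nlinarith [sqrt3_sq, ht.1, ht.2, sq_nonneg t, sq_nonneg (1 - t), sq_nonneg (2 - t),
    sq_nonneg (t + 1), mul_nonneg (by linarith [ht.2] : (0:ℝ) ≤ 1 - t) (by linarith [ht.2] : (0:ℝ) ≤ 2 - t),
    mul_nonneg ht.1 (by linarith [ht.1] : (0:ℝ) ≤ t + 1)]

lemma MB_1_3 : ∀ t ∈ Set.Icc (0:ℝ) 1, 1/4 ≤ sqDist (SP (hexVtx 1) (hexVtx (1 + 1)) t) (hexMid 3) := by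
  intro t ht
  rw [finAdd_1, hexVtx_1, hexVtx_2, hexMid_3]
  simp only [SP, sqDist, Prod.fst_add, Prod.snd_add, Prod.smul_fst, Prod.smul_snd, smul_eq_mul]
  nlinarith [sqrt3_sq, ht.1, ht.2, sq_nonneg t, sq_nonneg (1 - t), sq_nonneg (2 - t),
    sq_nonneg (t + 1), mul_nonneg (by linarith [ht.2] : (0:ℝ) ≤ 1 - t) (by linarith [ht.2] : (0:ℝ) ≤ 2 - t),
    mul_nonneg ht.1 (by linarith [ht.1] : (0:ℝ) ≤ t + 1)]

lemma MB_2_0 : ∀ t ∈ Set.Icc (0:ℝ) 1, 1/4 ≤ sqDist (SP (hexVtx 2) (hexVtx (2 + 1)) t) (hexMid 0) := by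
  intro t ht
  rw [finAdd_2, hexVtx_2, hexVtx_3, hexMid_0]
  simp only [SP, sqDist, Prod.fst_add, Prod.snd_add, Prod.smul_fst, Prod.smul_snd, smul_eq_mul]
  nlinarith [sqrt3_sq, ht.1, ht.2, sq_nonneg t, sq_nonneg (1 - t), sq_nonneg (2 - t),
    sq_nonneg (t + 1), mul_nonneg (by linarith [ht.2] : (0:ℝ) ≤ 1 - t) (by linarith [ht.2] : (0:ℝ) ≤ 2 - t),
    mul_nonneg ht.1 (by linarith [ht.1] : (0:ℝ) ≤ t + 1)]

lemma MB_2_1 : ∀ t ∈ Set.Icc (0:ℝ) 1, 1/4 ≤ sqDist (SP (hexVtx 2) (hexVtx (2 + 1)) t) (hexMid 1) := by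
  intro t ht
  rw [finAdd_2, hexVtx_2, hexVtx_3, hexMid_1]
  simp only [SP, sqDist, Prod.fst_add, Prod.snd_add, Prod.smul_fst, Prod.smul_snd, smul_eq_mul]
  nlinarith [sqrt3_sq, ht.1, ht.2, sq_nonneg t, sq_nonneg (1 - t), sq_nonneg (2 - t),
    sq_nonneg (t + 1), mul_nonneg (by linarith [ht.2] : (0:ℝ) ≤ 1 - t) (by linarith [ht.2] : (0:ℝ) ≤ 2 - t),
    mul_nonneg ht.1 (by linarith [ht.1] : (0:ℝ) ≤ t + 1)]

lemma MB_2_3 : ∀ t ∈ Set.Icc (0:ℝ) 1, 1/4 ≤ sqDist (SP (hexVtx 2) (hexVtx (2 + 1)) t) (hexMid 3) := by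
  intro t ht
  rw [finAdd_2, hexVtx_2, hexVtx_3, hexMid_3]
  simp only [SP, sqDist, Prod.fst_add, Prod.snd_add, Prod.smul_fst, Prod.smul_snd, smul_eq_mul]
  nlinarith [sqrt3_sq, ht.1, ht.2, sq_nonneg t, sq_nonneg (1 - t), sq_nonneg (2 - t),
    sq_nonneg (t + 1), mul_nonneg (by linarith [ht.2] : (0:ℝ) ≤ 1 - t) (by linarith [ht.2] : (0:ℝ) ≤ 2 - t),
    mul_nonneg ht.1 (by linarith [ht.1] : (0:ℝ) ≤ t + 1)]

lemma MB_3_0 : ∀ t ∈ Set.Icc (0:ℝ) 1, 1/4 ≤ sqDist (SP (hexVtx 3) (hexVtx (3 + 1)) t) (hexMid 0) := by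
  intro t ht
  rw [finAdd_3, hexVtx_3, hexVtx_4, hexMid_0]
  simp only [SP, sqDist, Prod.fst_add, Prod.snd_add, Prod.smul_fst, Prod.smul_snd, smul_eq_mul]
  nlinarith [sqrt3_sq, ht.1, ht.2, sq_nonneg t, sq_nonneg (1 - t), sq_nonneg (2 - t),
    sq_nonneg (t + 1), mul_nonneg (by linarith [ht.2] : (0:ℝ) ≤ 1 - t) (by linarith [ht.2] : (0:ℝ) ≤ 2 - t),
    mul_nonneg ht.1 (by linarith [ht.1] : (0:ℝ) ≤ t + 1)]

lemma MB_3_1 : ∀ t ∈ Set.Icc (0:ℝ) 1, 1/4 ≤ sqDist (SP (hexVtx 3) (hexVtx (3 + 1)) t) (hexMid 1) := by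
  intro t ht
  rw [finAdd_3, hexVtx_3, hexVtx_4, hexMid_1]
  simp only [SP, sqDist, Prod.fst_add, Prod.snd_add, Prod.smul_fst, Prod.smul_snd, smul_eq_mul]
  nlinarith [sqrt3_sq, ht.1, ht.2, sq_nonneg t, sq_nonneg (1 - t), sq_nonneg (2 - t),
    sq_nonneg (t + 1), mul_nonneg (by linarith [ht.2] : (0:ℝ) ≤ 1 - t) (by linarith [ht.2] : (0:ℝ) ≤ 2 - t),
    mul_nonneg ht.1 (by linarith [ht.1] : (0:ℝ) ≤ t + 1)]

lemma MB_4_0 : ∀ t ∈ Set.Icc (0:ℝ) 1, 1/4 ≤ sqDist (SP (hexVtx 4) (hexVtx (4 + 1)) t) (hexMid 0) := by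
  intro t ht
  rw [finAdd_4, hexVtx_4, hexVtx_5, hexMid_0]
  simp only [SP, sqDist, Prod.fst_add, Prod.snd_add, Prod.smul_fst, Prod.smul_snd, smul_eq_mul]
  nlinarith [sqrt3_sq, ht.1, ht.2, sq_nonneg t, sq_nonneg (1 - t), sq_nonneg (2 - t),
    sq_nonneg (t + 1), mul_nonneg (by linarith [ht.2] : (0:ℝ) ≤ 1 - t) (by linarith [ht.2] : (0:ℝ) ≤ 2 - t),
    mul_nonneg ht.1 (by linarith [ht.1] : (0:ℝ) ≤ t + 1)]

lemma MB_4_1 : ∀ t ∈ Set.Icc (0:ℝ) 1, 1/4 ≤ sqDist (SP (hexVtx 4) (hexVtx (4 + 1)) t) (hexMid 1) := by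
  intro t ht
  rw [finAdd_4, hexVtx_4, hexVtx_5, hexMid_1]
  simp only [SP, sqDist, Prod.fst_add, Prod.snd_add, Prod.smul_fst, Prod.smul_snd, smul_eq_mul]
  nlinarith [sqrt3_sq, ht.1, ht.2, sq_nonneg t, sq_nonneg (1 - t), sq_nonneg (2 - t),
    sq_nonneg (t + 1), mul_nonneg (by linarith [ht.2] : (0:ℝ) ≤ 1 - t) (by linarith [ht.2] : (0:ℝ) ≤ 2 - t),
    mul_nonneg ht.1 (by linarith [ht.1] : (0:ℝ) ≤ t + 1)]

lemma MB_4_3 : ∀ t ∈ Set.Icc (0:ℝ) 1, 1/4 ≤ sqDist (SP (hexVtx 4) (hexVtx (4 + 1)) t) (hexMid 3) := by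
  intro t ht
  rw [finAdd_4, hexVtx_4, hexVtx_5, hexMid_3]
  simp only [SP, sqDist, Prod.fst_add, Prod.snd_add, Prod.smul_fst, Prod.smul_snd, smul_eq_mul]
  nlinarith [sqrt3_sq, ht.1, ht.2, sq_nonneg t, sq_nonneg (1 - t), sq_nonneg (2 - t),
    sq_nonneg (t + 1), mul_nonneg (by linarith [ht.2] : (0:ℝ) ≤ 1 - t) (by linarith [ht.2] : (0:ℝ) ≤ 2 - t),
    mul_nonneg ht.1 (by linarith [ht.1] : (0:ℝ) ≤ t + 1)]

lemma MB_5_0 : ∀ t ∈ Set.Icc (0:ℝ) 1, 1/4 ≤ sqDist (SP (hexVtx 5) (hexVtx (5 + 1)) t) (hexMid 0) := by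
  intro t ht
  rw [finAdd_5, hexVtx_5, hexVtx_0, hexMid_0]
  simp only [SP, sqDist, Prod.fst_add, Prod.snd_add, Prod.smul_fst, Prod.smul_snd, smul_eq_mul]
  nlinarith [sqrt3_sq, ht.1, ht.2, sq_nonneg t, sq_nonneg (1 - t), sq_nonneg (2 - t),
    sq_nonneg (t + 1), mul_nonneg (by linarith [ht.2] : (0:ℝ) ≤ 1 - t) (by linarith [ht.2] : (0:ℝ) ≤ 2 - t),
    mul_nonneg ht.1 (by linarith [ht.1] : (0:ℝ) ≤ t + 1)]

lemma MB_5_1 : ∀ t ∈ Set.Icc (0:ℝ) 1, 1/4 ≤ sqDist (SP (hexVtx 5) (hexVtx (5 + 1)) t) (hexMid 1) := by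
  intro t ht
  rw [finAdd_5, hexVtx_5, hexVtx_0, hexMid_1]
  simp only [SP, sqDist, Prod.fst_add, Prod.snd_add, Prod.smul_fst, Prod.smul_snd, smul_eq_mul]
  nlinarith [sqrt3_sq, ht.1, ht.2, sq_nonneg t, sq_nonneg (1 - t), sq_nonneg (2 - t),
    sq_nonneg (t + 1), mul_nonneg (by linarith [ht.2] : (0:ℝ) ≤ 1 - t) (by linarith [ht.2] : (0:ℝ) ≤ 2 - t),
    mul_nonneg ht.1 (by linarith [ht.1] : (0:ℝ) ≤ t + 1)]

lemma MB_5_3 : ∀ t ∈ Set.Icc (0:ℝ) 1, 1/4 ≤ sqDist (SP (hexVtx 5) (hexVtx (5 + 1)) t) (hexMid 3) := by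
  intro t ht
  rw [finAdd_5, hexVtx_5, hexVtx_0, hexMid_3]
  simp only [SP, sqDist, Prod.fst_add, Prod.snd_add, Prod.smul_fst, Prod.smul_snd, smul_eq_mul]
  nlinarith [sqrt3_sq, ht.1, ht.2, sq_nonneg t, sq_nonneg (1 - t), sq_nonneg (2 - t),
    sq_nonneg (t + 1), mul_nonneg (by linarith [ht.2] : (0:ℝ) ≤ 1 - t) (by linarith [ht.2] : (0:ℝ) ≤ 2 - t),
    mul_nonneg ht.1 (by linarith [ht.1] : (0:ℝ) ≤ t + 1)]

lemma SP_one (p q : ℝ × ℝ) : SP p q 1 = q := by simp [SP]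

lemma dist_SP_p (p q : ℝ × ℝ) (hpq : sqDist p q = 1) (t : ℝ) :
    sqDist (SP p q t) p = t ^ 2 := by
  rw [sqDist_SP, hpq]
  simp only [sqDist, sig]
  ring

lemma dist_SP_q (p q : ℝ × ℝ) (hpq : sqDist p q = 1) (t : ℝ) :
    sqDist (SP p q t) q = (t - 1) ^ 2 := by
  rw [sqDist_SP]
  have hs : sig p q q = sqDist p q := by simp only [sig, sqDist]; ring
  rw [hs, hpq]
  have hq2 : sqDist p q = 1 := hpq
  nlinarith [hq2]

lemma dist_SP_mid (p q : ℝ × ℝ) (hpq : sqDist p q = 1) (t : ℝ) :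
    sqDist (SP p q t) (SP p q (1/2)) = (t - 1/2) ^ 2 := sqDist_SP_self p q hpq t (1/2)

section Eval

variable (p q : ℝ × ℝ) (γ : Set (ℝ × ℝ))

-- value of sInf on a subinterval, then integral over it
lemma sInf_piece (hpq : sqDist p q = 1) (a0 : ℝ × ℝ) (ha0 : a0 ∈ γ) (t : ℝ) (c : ℝ)
    (h0 : sqDist (SP p q t) a0 = c)
    (hall : ∀ a ∈ γ, c ≤ sqDist (SP p q t) a) :
    sInf ((fun a => sqDist (SP p q t) a) '' γ) = c :=
  sInf_eval _ c a0 ha0 h0 hall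

lemma eval_unhelped (hpq : sqDist p q = 1) (hfin : γ.Finite) (hp : p ∈ γ) (hq : q ∈ γ)
    (H : ∀ a ∈ γ, a = p ∨ a = q ∨ ∀ t ∈ Set.Icc (0:ℝ) 1, 1/4 ≤ sqDist (SP p q t) a) :
    ∫ t in (0:ℝ)..1, sInf ((fun a => sqDist (SP p q t) a) '' γ) = 1/12 := by
  have hne : γ.Nonempty := ⟨p, hp⟩
  have hcont : Continuous (fun t => sInf ((fun a => sqDist (SP p q t) a) '' γ)) :=
    cont_sInf γ hfin hne _ (fun a => cont_sqDist_SP p q a)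
  have hsplit : (∫ t in (0:ℝ)..(1/2), sInf ((fun a => sqDist (SP p q t) a) '' γ)) +
      (∫ t in (1/2:ℝ)..1, sInf ((fun a => sqDist (SP p q t) a) '' γ))
      = ∫ t in (0:ℝ)..1, sInf ((fun a => sqDist (SP p q t) a) '' γ) :=
    integral_add_adjacent_intervals (hcont.intervalIntegrable _ _) (hcont.intervalIntegrable _ _)
  have h1 : ∫ t in (0:ℝ)..(1/2), sInf ((fun a => sqDist (SP p q t) a) '' γ)
      = ∫ t in (0:ℝ)..(1/2), (t - 0) ^ 2 := by
    apply integral_congr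
    intro t ht
    rw [Set.uIcc_of_le (by norm_num)] at ht
    have ht1 : t ∈ Set.Icc (0:ℝ) 1 := ⟨ht.1, by linarith [ht.2]⟩
    simp only
    rw [show ((t:ℝ) - 0)^2 = t^2 by ring]
    apply sInf_piece p q γ hpq p hp t _ (dist_SP_p p q hpq t)
    intro a ha
    rcases H a ha with h | h | hb
    · rw [h, dist_SP_p p q hpq t]
    · rw [h, dist_SP_q p q hpq t]; nlinarith [ht.1, ht.2]
    · have := hb t ht1; nlinarith [ht.1, ht.2]
  have h2 : ∫ t in (1/2:ℝ)..1, sInf ((fun a => sqDist (SP p q t) a) '' γ)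
      = ∫ t in (1/2:ℝ)..1, (t - 1) ^ 2 := by
    apply integral_congr
    intro t ht
    rw [Set.uIcc_of_le (by norm_num)] at ht
    have ht1 : t ∈ Set.Icc (0:ℝ) 1 := ⟨by linarith [ht.1], ht.2⟩
    simp only
    apply sInf_piece p q γ hpq q hq t _ (dist_SP_q p q hpq t)
    intro a ha
    rcases H a ha with h | h | hb
    · rw [h, dist_SP_p p q hpq t]; nlinarith [ht.1, ht.2]
    · rw [h, dist_SP_q p q hpq t]
    · have := hb t ht1; nlinarith [ht.1, ht.2]
  rw [← hsplit, h1, h2, integral_sq_shift, integral_sq_shift]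
  norm_num

lemma eval_helped (hpq : sqDist p q = 1) (hfin : γ.Finite) (hp : p ∈ γ) (hq : q ∈ γ)
    (hm : SP p q (1/2) ∈ γ)
    (H : ∀ a ∈ γ, a = p ∨ a = q ∨ a = SP p q (1/2) ∨
      ∀ t ∈ Set.Icc (0:ℝ) 1, 1/4 ≤ sqDist (SP p q t) a) :
    ∫ t in (0:ℝ)..1, sInf ((fun a => sqDist (SP p q t) a) '' γ) = 1/48 := by
  have hne : γ.Nonempty := ⟨p, hp⟩
  have hcont : Continuous (fun t => sInf ((fun a => sqDist (SP p q t) a) '' γ)) :=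
    cont_sInf γ hfin hne _ (fun a => cont_sqDist_SP p q a)
  have hii : ∀ a b : ℝ, IntervalIntegrable
      (fun t => sInf ((fun a => sqDist (SP p q t) a) '' γ)) MeasureTheory.volume a b :=
    fun a b => hcont.intervalIntegrable a b
  have hsplit1 : (∫ t in (0:ℝ)..(1/4), sInf ((fun a => sqDist (SP p q t) a) '' γ)) +
      (∫ t in (1/4:ℝ)..(1/2), sInf ((fun a => sqDist (SP p q t) a) '' γ))
      = ∫ t in (0:ℝ)..(1/2), sInf ((fun a => sqDist (SP p q t) a) '' γ) :=
    integral_add_adjacent_intervals (hii _ _) (hii _ _)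
  have hsplit2 : (∫ t in (1/2:ℝ)..(3/4), sInf ((fun a => sqDist (SP p q t) a) '' γ)) +
      (∫ t in (3/4:ℝ)..1, sInf ((fun a => sqDist (SP p q t) a) '' γ))
      = ∫ t in (1/2:ℝ)..1, sInf ((fun a => sqDist (SP p q t) a) '' γ) :=
    integral_add_adjacent_intervals (hii _ _) (hii _ _)
  have hsplit : (∫ t in (0:ℝ)..(1/2), sInf ((fun a => sqDist (SP p q t) a) '' γ)) +
      (∫ t in (1/2:ℝ)..1, sInf ((fun a => sqDist (SP p q t) a) '' γ))
      = ∫ t in (0:ℝ)..1, sInf ((fun a => sqDist (SP p q t) a) '' γ) :=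
    integral_add_adjacent_intervals (hii _ _) (hii _ _)
  have piece : ∀ (u v c : ℝ) (a0 : ℝ × ℝ), a0 ∈ γ → u ≤ v → 0 ≤ u → v ≤ 1 →
      (∀ t, sqDist (SP p q t) a0 = (t - c) ^ 2) →
      (∀ t, t ∈ Set.Icc u v → (t - c) ^ 2 ≤ t ^ 2) →
      (∀ t, t ∈ Set.Icc u v → (t - c) ^ 2 ≤ (t - 1) ^ 2) →
      (∀ t, t ∈ Set.Icc u v → (t - c) ^ 2 ≤ (t - 1/2) ^ 2) →
      (∀ t, t ∈ Set.Icc u v → (t - c) ^ 2 ≤ 1/4) →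
      ∫ t in u..v, sInf ((fun a => sqDist (SP p q t) a) '' γ)
        = ((v - c) ^ 3 - (u - c) ^ 3) / 3 := by
    intro u v c a0 ha0 huv hu hv hd h1 h2 h3 h4
    rw [← integral_sq_shift u v c]
    apply integral_congr
    intro t ht
    rw [Set.uIcc_of_le huv] at ht
    have ht1 : t ∈ Set.Icc (0:ℝ) 1 := ⟨le_trans hu ht.1, le_trans ht.2 hv⟩
    simp only
    apply sInf_piece p q γ hpq a0 ha0 t _ (hd t)
    intro a ha
    rcases H a ha with h | h | h | hb
    · rw [h, dist_SP_p p q hpq t]; exact h1 t ht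
    · rw [h, dist_SP_q p q hpq t]; exact h2 t ht
    · rw [h, dist_SP_mid p q hpq t]; exact h3 t ht
    · exact le_trans (h4 t ht) (hb t ht1)
  have e1 := piece 0 (1/4) 0 p hp (by norm_num) (by norm_num) (by norm_num)
    (fun t => by rw [dist_SP_p p q hpq t]; ring)
    (fun t ht => by nlinarith [ht.1, ht.2]) (fun t ht => by nlinarith [ht.1, ht.2])
    (fun t ht => by nlinarith [ht.1, ht.2]) (fun t ht => by nlinarith [ht.1, ht.2])
  have e2 := piece (1/4) (1/2) (1/2) (SP p q (1/2)) hm (by norm_num) (by norm_num) (by norm_num)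
    (dist_SP_mid p q hpq)
    (fun t ht => by nlinarith [ht.1, ht.2]) (fun t ht => by nlinarith [ht.1, ht.2])
    (fun t ht => by nlinarith [ht.1, ht.2]) (fun t ht => by nlinarith [ht.1, ht.2])
  have e3 := piece (1/2) (3/4) (1/2) (SP p q (1/2)) hm (by norm_num) (by norm_num) (by norm_num)
    (dist_SP_mid p q hpq)
    (fun t ht => by nlinarith [ht.1, ht.2]) (fun t ht => by nlinarith [ht.1, ht.2])
    (fun t ht => by nlinarith [ht.1, ht.2]) (fun t ht => by nlinarith [ht.1, ht.2])
  have e4 := piece (3/4) 1 1 q hq (by norm_num) (by norm_num) (by norm_num)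
    (fun t => dist_SP_q p q hpq t)
    (fun t ht => by nlinarith [ht.1, ht.2]) (fun t ht => by nlinarith [ht.1, ht.2])
    (fun t ht => by nlinarith [ht.1, ht.2]) (fun t ht => by nlinarith [ht.1, ht.2])
  rw [← hsplit, ← hsplit1, ← hsplit2, e1, e2, e3, e4]
  norm_num

end Eval

lemma int_m2 : ∫ t in (0:ℝ)..1, m2 t = 1/12 := by
  have hsplit : (∫ t in (0:ℝ)..(1/2), m2 t) + (∫ t in (1/2:ℝ)..1, m2 t)
      = ∫ t in (0:ℝ)..1, m2 t :=
    integral_add_adjacent_intervals (m2_cont.intervalIntegrable _ _)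
      (m2_cont.intervalIntegrable _ _)
  have h1 : ∫ t in (0:ℝ)..(1/2), m2 t = ∫ t in (0:ℝ)..(1/2), (t - 0) ^ 2 := by
    apply integral_congr
    intro t ht
    rw [Set.uIcc_of_le (by norm_num)] at ht
    have : m2 t = t ^ 2 := min_eq_left (by nlinarith [ht.1, ht.2])
    rw [this]; ring
  have h2 : ∫ t in (1/2:ℝ)..1, m2 t = ∫ t in (1/2:ℝ)..1, (t - 1) ^ 2 := by
    apply integral_congr
    intro t ht
    rw [Set.uIcc_of_le (by norm_num)] at ht
    have : m2 t = (1 - t) ^ 2 := min_eq_right (by nlinarith [ht.1, ht.2])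
    rw [this]; ring
  rw [← hsplit, h1, h2, integral_sq_shift, integral_sq_shift]
  norm_num

lemma side_lower (p q : ℝ × ℝ) (hpq : sqDist p q = 1) (α : Set (ℝ × ℝ)) (hα : α.Finite)
    (HV : ∀ v ∈ hexβ, ∀ t ∈ Set.Icc (0:ℝ) 1, m2 t ≤ sqDist (SP p q t) v) :
    1/12 - ∑ b ∈ hα.toFinset, max 0 (sig p q b - sqDist p b) / 4
      ≤ ∫ t in (0:ℝ)..1, sInf ((fun a => sqDist (SP p q t) a) '' (α ∪ hexβ)) := by
  classical
  set s := hα.toFinset with hs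
  have hfin : (α ∪ hexβ).Finite := hα.union (Set.finite_range hexVtx)
  have hne : (α ∪ hexβ).Nonempty := ⟨hexVtx 0, Or.inr ⟨0, rfl⟩⟩
  set g : ℝ → ℝ := fun t => m2 t - ∑ b ∈ s, max 0 (m2 t - sqDist (SP p q t) b) with hg
  have hgcont : Continuous g := by
    apply m2_cont.sub
    exact continuous_finset_sum _ (fun b _ => cont_max0 (m2_cont.sub (cont_sqDist_SP p q b)))
  have hcont : Continuous (fun t => sInf ((fun a => sqDist (SP p q t) a) '' (α ∪ hexβ))) :=
    cont_sInf _ hfin hne _ (fun a => cont_sqDist_SP p q a)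
  have hmono : ∀ t ∈ Set.Icc (0:ℝ) 1,
      g t ≤ sInf ((fun a => sqDist (SP p q t) a) '' (α ∪ hexβ)) := by
    intro t ht
    apply sInf_lb hne
    intro a ha
    have hsumnn : (0:ℝ) ≤ ∑ b ∈ s, max 0 (m2 t - sqDist (SP p q t) b) :=
      Finset.sum_nonneg (fun b _ => le_max_left _ _)
    rcases ha with hb | hv
    · have hbs : a ∈ s := hα.mem_toFinset.2 hb
      have h1 : max 0 (m2 t - sqDist (SP p q t) a)
          ≤ ∑ b ∈ s, max 0 (m2 t - sqDist (SP p q t) b) :=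
        Finset.single_le_sum (f := fun b => max 0 (m2 t - sqDist (SP p q t) b))
          (fun b _ => le_max_left _ _) hbs
      have h2 : m2 t - sqDist (SP p q t) a ≤ max 0 (m2 t - sqDist (SP p q t) a) :=
        le_max_right _ _
      simp only [hg]
      linarith
    · have := HV a hv t ht
      simp only [hg]
      linarith
  have hint : ∫ t in (0:ℝ)..1, g t
      ≤ ∫ t in (0:ℝ)..1, sInf ((fun a => sqDist (SP p q t) a) '' (α ∪ hexβ)) :=
    integral_mono_on (by norm_num) (hgcont.intervalIntegrable _ _)
      (hcont.intervalIntegrable _ _) hmono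
  have hgeq : ∫ t in (0:ℝ)..1, g t
      = 1/12 - ∑ b ∈ s, ∫ t in (0:ℝ)..1, max 0 (m2 t - sqDist (SP p q t) b) := by
    simp only [hg]
    rw [intervalIntegral.integral_sub (f := fun t => m2 t)
      (g := fun t => ∑ b ∈ s, max 0 (m2 t - sqDist (SP p q t) b)) (m2_cont.intervalIntegrable _ _)
      ((continuous_finset_sum _ (fun b _ =>
        cont_max0 (m2_cont.sub (cont_sqDist_SP p q b)))).intervalIntegrable _ _),
      intervalIntegral.integral_finset_sum
        (f := fun b t => max 0 (m2 t - sqDist (SP p q t) b)) (fun b _ =>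
        (cont_max0 (m2_cont.sub (cont_sqDist_SP p q b))).intervalIntegrable _ _),
      int_m2]
  have hsum : ∑ b ∈ s, ∫ t in (0:ℝ)..1, max 0 (m2 t - sqDist (SP p q t) b)
      ≤ ∑ b ∈ s, max 0 (sig p q b - sqDist p b) / 4 :=
    Finset.sum_le_sum (fun b _ => side_imp p q b hpq)
  linarith


lemma HV_0 : ∀ v ∈ hexβ, ∀ t ∈ Set.Icc (0:ℝ) 1,
    m2 t ≤ sqDist (SP (hexVtx 0) (hexVtx (0 + 1)) t) v := by
  rintro v ⟨i, rfl⟩ t ht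
  fin_cases i
  · have h := dist_SP_p (hexVtx 0) (hexVtx (0+1)) (hexSide_0) t
    have : m2 t ≤ t ^ 2 := min_le_left _ _
    rw [show hexVtx (⟨0, by norm_num⟩ : Fin 6) = hexVtx 0 from rfl, h]
    exact this
  · have h := dist_SP_q (hexVtx 0) (hexVtx (0+1)) (hexSide_0) t
    have h2 : m2 t ≤ (1 - t) ^ 2 := min_le_right _ _
    rw [show hexVtx (⟨1, by norm_num⟩ : Fin 6) = hexVtx (0+1) from rfl, h]
    nlinarith [h2]
  · exact le_trans (m2_le_quarter ht)
      (VB_0_2 t ht)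
  · exact le_trans (m2_le_quarter ht)
      (VB_0_3 t ht)
  · exact le_trans (m2_le_quarter ht)
      (VB_0_4 t ht)
  · exact le_trans (m2_le_quarter ht)
      (VB_0_5 t ht)

lemma HV_1 : ∀ v ∈ hexβ, ∀ t ∈ Set.Icc (0:ℝ) 1,
    m2 t ≤ sqDist (SP (hexVtx 1) (hexVtx (1 + 1)) t) v := by
  rintro v ⟨i, rfl⟩ t ht
  fin_cases i
  · exact le_trans (m2_le_quarter ht)
      (VB_1_0 t ht)
  · have h := dist_SP_p (hexVtx 1) (hexVtx (1+1)) (hexSide_1) t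
    have : m2 t ≤ t ^ 2 := min_le_left _ _
    rw [show hexVtx (⟨1, by norm_num⟩ : Fin 6) = hexVtx 1 from rfl, h]
    exact this
  · have h := dist_SP_q (hexVtx 1) (hexVtx (1+1)) (hexSide_1) t
    have h2 : m2 t ≤ (1 - t) ^ 2 := min_le_right _ _
    rw [show hexVtx (⟨2, by norm_num⟩ : Fin 6) = hexVtx (1+1) from rfl, h]
    nlinarith [h2]
  · exact le_trans (m2_le_quarter ht)
      (VB_1_3 t ht)
  · exact le_trans (m2_le_quarter ht)
      (VB_1_4 t ht)
  · exact le_trans (m2_le_quarter ht)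
      (VB_1_5 t ht)

lemma HV_2 : ∀ v ∈ hexβ, ∀ t ∈ Set.Icc (0:ℝ) 1,
    m2 t ≤ sqDist (SP (hexVtx 2) (hexVtx (2 + 1)) t) v := by
  rintro v ⟨i, rfl⟩ t ht
  fin_cases i
  · exact le_trans (m2_le_quarter ht)
      (VB_2_0 t ht)
  · exact le_trans (m2_le_quarter ht)
      (VB_2_1 t ht)
  · have h := dist_SP_p (hexVtx 2) (hexVtx (2+1)) (hexSide_2) t
    have : m2 t ≤ t ^ 2 := min_le_left _ _
    rw [show hexVtx (⟨2, by norm_num⟩ : Fin 6) = hexVtx 2 from rfl, h]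
    exact this
  · have h := dist_SP_q (hexVtx 2) (hexVtx (2+1)) (hexSide_2) t
    have h2 : m2 t ≤ (1 - t) ^ 2 := min_le_right _ _
    rw [show hexVtx (⟨3, by norm_num⟩ : Fin 6) = hexVtx (2+1) from rfl, h]
    nlinarith [h2]
  · exact le_trans (m2_le_quarter ht)
      (VB_2_4 t ht)
  · exact le_trans (m2_le_quarter ht)
      (VB_2_5 t ht)

lemma HV_3 : ∀ v ∈ hexβ, ∀ t ∈ Set.Icc (0:ℝ) 1,
    m2 t ≤ sqDist (SP (hexVtx 3) (hexVtx (3 + 1)) t) v := by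
  rintro v ⟨i, rfl⟩ t ht
  fin_cases i
  · exact le_trans (m2_le_quarter ht)
      (VB_3_0 t ht)
  · exact le_trans (m2_le_quarter ht)
      (VB_3_1 t ht)
  · exact le_trans (m2_le_quarter ht)
      (VB_3_2 t ht)
  · have h := dist_SP_p (hexVtx 3) (hexVtx (3+1)) (hexSide_3) t
    have : m2 t ≤ t ^ 2 := min_le_left _ _
    rw [show hexVtx (⟨3, by norm_num⟩ : Fin 6) = hexVtx 3 from rfl, h]
    exact this
  · have h := dist_SP_q (hexVtx 3) (hexVtx (3+1)) (hexSide_3) t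
    have h2 : m2 t ≤ (1 - t) ^ 2 := min_le_right _ _
    rw [show hexVtx (⟨4, by norm_num⟩ : Fin 6) = hexVtx (3+1) from rfl, h]
    nlinarith [h2]
  · exact le_trans (m2_le_quarter ht)
      (VB_3_5 t ht)

lemma HV_4 : ∀ v ∈ hexβ, ∀ t ∈ Set.Icc (0:ℝ) 1,
    m2 t ≤ sqDist (SP (hexVtx 4) (hexVtx (4 + 1)) t) v := by
  rintro v ⟨i, rfl⟩ t ht
  fin_cases i
  · exact le_trans (m2_le_quarter ht)
      (VB_4_0 t ht)
  · exact le_trans (m2_le_quarter ht)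
      (VB_4_1 t ht)
  · exact le_trans (m2_le_quarter ht)
      (VB_4_2 t ht)
  · exact le_trans (m2_le_quarter ht)
      (VB_4_3 t ht)
  · have h := dist_SP_p (hexVtx 4) (hexVtx (4+1)) (hexSide_4) t
    have : m2 t ≤ t ^ 2 := min_le_left _ _
    rw [show hexVtx (⟨4, by norm_num⟩ : Fin 6) = hexVtx 4 from rfl, h]
    exact this
  · have h := dist_SP_q (hexVtx 4) (hexVtx (4+1)) (hexSide_4) t
    have h2 : m2 t ≤ (1 - t) ^ 2 := min_le_right _ _
    rw [show hexVtx (⟨5, by norm_num⟩ : Fin 6) = hexVtx (4+1) from rfl, h]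
    nlinarith [h2]

lemma HV_5 : ∀ v ∈ hexβ, ∀ t ∈ Set.Icc (0:ℝ) 1,
    m2 t ≤ sqDist (SP (hexVtx 5) (hexVtx (5 + 1)) t) v := by
  rintro v ⟨i, rfl⟩ t ht
  fin_cases i
  · have h := dist_SP_q (hexVtx 5) (hexVtx (5+1)) (hexSide_5) t
    have h2 : m2 t ≤ (1 - t) ^ 2 := min_le_right _ _
    rw [show hexVtx (⟨0, by norm_num⟩ : Fin 6) = hexVtx (5+1) from rfl, h]
    nlinarith [h2]
  · exact le_trans (m2_le_quarter ht)
      (VB_5_1 t ht)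
  · exact le_trans (m2_le_quarter ht)
      (VB_5_2 t ht)
  · exact le_trans (m2_le_quarter ht)
      (VB_5_3 t ht)
  · exact le_trans (m2_le_quarter ht)
      (VB_5_4 t ht)
  · have h := dist_SP_p (hexVtx 5) (hexVtx (5+1)) (hexSide_5) t
    have : m2 t ≤ t ^ 2 := min_le_left _ _
    rw [show hexVtx (⟨5, by norm_num⟩ : Fin 6) = hexVtx 5 from rfl, h]
    exact this

lemma hexError_eq (γ : Set (ℝ × ℝ)) : hexError γ = ∑ j : Fin 6, (1/6 : ℝ) *
    ∫ t in (0:ℝ)..1, sInf ((fun a => sqDist (SP (hexVtx j) (hexVtx (j+1)) t) a) '' γ) := rfl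

lemma hexError_lower (α : Set (ℝ × ℝ)) (hα : α.Finite) :
    1/12 - (hα.toFinset.card : ℝ)/96 ≤ hexError (α ∪ hexβ) := by
  rw [hexError_eq, Fin.sum_univ_six]
  have L0 := side_lower (hexVtx 0) (hexVtx (0+1)) hexSide_0 α hα HV_0
  have L1 := side_lower (hexVtx 1) (hexVtx (1+1)) hexSide_1 α hα HV_1
  have L2 := side_lower (hexVtx 2) (hexVtx (2+1)) hexSide_2 α hα HV_2
  have L3 := side_lower (hexVtx 3) (hexVtx (3+1)) hexSide_3 α hα HV_3
  have L4 := side_lower (hexVtx 4) (hexVtx (4+1)) hexSide_4 α hα HV_4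
  have L5 := side_lower (hexVtx 5) (hexVtx (5+1)) hexSide_5 α hα HV_5
  have key : ∀ b : ℝ × ℝ,
      max 0 (sig (hexVtx 0) (hexVtx (0+1)) b - sqDist (hexVtx 0) b) / 4
      + max 0 (sig (hexVtx 1) (hexVtx (1+1)) b - sqDist (hexVtx 1) b) / 4
      + max 0 (sig (hexVtx 2) (hexVtx (2+1)) b - sqDist (hexVtx 2) b) / 4
      + max 0 (sig (hexVtx 3) (hexVtx (3+1)) b - sqDist (hexVtx 3) b) / 4
      + max 0 (sig (hexVtx 4) (hexVtx (4+1)) b - sqDist (hexVtx 4) b) / 4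
      + max 0 (sig (hexVtx 5) (hexVtx (5+1)) b - sqDist (hexVtx 5) b) / 4 ≤ 1/16 := by
    intro b
    have h := geomG b
    rw [Fin.sum_univ_six] at h
    linarith
  have hsum : (∑ b ∈ hα.toFinset, max 0 (sig (hexVtx 0) (hexVtx (0+1)) b - sqDist (hexVtx 0) b) / 4)
      + (∑ b ∈ hα.toFinset, max 0 (sig (hexVtx 1) (hexVtx (1+1)) b - sqDist (hexVtx 1) b) / 4)
      + (∑ b ∈ hα.toFinset, max 0 (sig (hexVtx 2) (hexVtx (2+1)) b - sqDist (hexVtx 2) b) / 4)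
      + (∑ b ∈ hα.toFinset, max 0 (sig (hexVtx 3) (hexVtx (3+1)) b - sqDist (hexVtx 3) b) / 4)
      + (∑ b ∈ hα.toFinset, max 0 (sig (hexVtx 4) (hexVtx (4+1)) b - sqDist (hexVtx 4) b) / 4)
      + (∑ b ∈ hα.toFinset, max 0 (sig (hexVtx 5) (hexVtx (5+1)) b - sqDist (hexVtx 5) b) / 4)
      ≤ (hα.toFinset.card : ℝ) * (1/16) := by
    rw [← Finset.sum_add_distrib, ← Finset.sum_add_distrib, ← Finset.sum_add_distrib,
      ← Finset.sum_add_distrib, ← Finset.sum_add_distrib]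
    calc _ ≤ ∑ _b ∈ hα.toFinset, (1/16 : ℝ) := Finset.sum_le_sum (fun b _ => key b)
      _ = (hα.toFinset.card : ℝ) * (1/16) := by rw [Finset.sum_const, nsmul_eq_mul]
  linarith
lemma hexError_C6 : hexError (hexβ) = 1/12 := by
  have hfin : (hexβ).Finite := Set.finite_range _
  have ev0 := eval_unhelped (hexVtx 0) (hexVtx (0+1)) (hexβ) hexSide_0 hfin ⟨0, rfl⟩ ⟨0 + 1, rfl⟩
    (by
      intro a ha
      obtain ⟨i, rfl⟩ := ha
      fin_cases i
      · exact Or.inl rfl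
      · exact Or.inr (Or.inl rfl)
      · exact Or.inr (Or.inr (VB_0_2))
      · exact Or.inr (Or.inr (VB_0_3))
      · exact Or.inr (Or.inr (VB_0_4))
      · exact Or.inr (Or.inr (VB_0_5))
      )
  have ev1 := eval_unhelped (hexVtx 1) (hexVtx (1+1)) (hexβ) hexSide_1 hfin ⟨1, rfl⟩ ⟨1 + 1, rfl⟩
    (by
      intro a ha
      obtain ⟨i, rfl⟩ := ha
      fin_cases i
      · exact Or.inr (Or.inr (VB_1_0))
      · exact Or.inl rfl
      · exact Or.inr (Or.inl rfl)
      · exact Or.inr (Or.inr (VB_1_3))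
      · exact Or.inr (Or.inr (VB_1_4))
      · exact Or.inr (Or.inr (VB_1_5))
      )
  have ev2 := eval_unhelped (hexVtx 2) (hexVtx (2+1)) (hexβ) hexSide_2 hfin ⟨2, rfl⟩ ⟨2 + 1, rfl⟩
    (by
      intro a ha
      obtain ⟨i, rfl⟩ := ha
      fin_cases i
      · exact Or.inr (Or.inr (VB_2_0))
      · exact Or.inr (Or.inr (VB_2_1))
      · exact Or.inl rfl
      · exact Or.inr (Or.inl rfl)
      · exact Or.inr (Or.inr (VB_2_4))
      · exact Or.inr (Or.inr (VB_2_5))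
      )
  have ev3 := eval_unhelped (hexVtx 3) (hexVtx (3+1)) (hexβ) hexSide_3 hfin ⟨3, rfl⟩ ⟨3 + 1, rfl⟩
    (by
      intro a ha
      obtain ⟨i, rfl⟩ := ha
      fin_cases i
      · exact Or.inr (Or.inr (VB_3_0))
      · exact Or.inr (Or.inr (VB_3_1))
      · exact Or.inr (Or.inr (VB_3_2))
      · exact Or.inl rfl
      · exact Or.inr (Or.inl rfl)
      · exact Or.inr (Or.inr (VB_3_5))
      )
  have ev4 := eval_unhelped (hexVtx 4) (hexVtx (4+1)) (hexβ) hexSide_4 hfin ⟨4, rfl⟩ ⟨4 + 1, rfl⟩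
    (by
      intro a ha
      obtain ⟨i, rfl⟩ := ha
      fin_cases i
      · exact Or.inr (Or.inr (VB_4_0))
      · exact Or.inr (Or.inr (VB_4_1))
      · exact Or.inr (Or.inr (VB_4_2))
      · exact Or.inr (Or.inr (VB_4_3))
      · exact Or.inl rfl
      · exact Or.inr (Or.inl rfl)
      )
  have ev5 := eval_unhelped (hexVtx 5) (hexVtx (5+1)) (hexβ) hexSide_5 hfin ⟨5, rfl⟩ ⟨5 + 1, rfl⟩
    (by
      intro a ha
      obtain ⟨i, rfl⟩ := ha
      fin_cases i
      · exact Or.inr (Or.inl rfl)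
      · exact Or.inr (Or.inr (VB_5_1))
      · exact Or.inr (Or.inr (VB_5_2))
      · exact Or.inr (Or.inr (VB_5_3))
      · exact Or.inr (Or.inr (VB_5_4))
      · exact Or.inl rfl
      )
  rw [hexError_eq, Fin.sum_univ_six, ev0, ev1, ev2, ev3, ev4, ev5]
  norm_num

lemma hexError_C7 : hexError (({hexMid 0} : Set (ℝ × ℝ)) ∪ hexβ) = 7/96 := by
  have hfin : (({hexMid 0} : Set (ℝ × ℝ)) ∪ hexβ).Finite := (Set.toFinite _).union (Set.finite_range _)
  have ev0 := eval_helped (hexVtx 0) (hexVtx (0+1)) (({hexMid 0} : Set (ℝ × ℝ)) ∪ hexβ) hexSide_0 hfin (Set.mem_union_right _ ⟨0, rfl⟩) (Set.mem_union_right _ ⟨0 + 1, rfl⟩) (Set.mem_union_left _ rfl)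
    (by
      intro a ha
      rcases ha with h1 | ⟨i, rfl⟩
      · rw [Set.mem_singleton_iff] at h1
        exact Or.inr (Or.inr (Or.inl h1))
      · fin_cases i
        · exact Or.inl rfl
        · exact Or.inr (Or.inl rfl)
        · exact Or.inr (Or.inr (Or.inr (VB_0_2)))
        · exact Or.inr (Or.inr (Or.inr (VB_0_3)))
        · exact Or.inr (Or.inr (Or.inr (VB_0_4)))
        · exact Or.inr (Or.inr (Or.inr (VB_0_5)))
      )
  have ev1 := eval_unhelped (hexVtx 1) (hexVtx (1+1)) (({hexMid 0} : Set (ℝ × ℝ)) ∪ hexβ) hexSide_1 hfin (Set.mem_union_right _ ⟨1, rfl⟩) (Set.mem_union_right _ ⟨1 + 1, rfl⟩)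
    (by
      intro a ha
      rcases ha with h1 | ⟨i, rfl⟩
      · rw [Set.mem_singleton_iff] at h1
        exact Or.inr (Or.inr (h1 ▸ MB_1_0))
      · fin_cases i
        · exact Or.inr (Or.inr (VB_1_0))
        · exact Or.inl rfl
        · exact Or.inr (Or.inl rfl)
        · exact Or.inr (Or.inr (VB_1_3))
        · exact Or.inr (Or.inr (VB_1_4))
        · exact Or.inr (Or.inr (VB_1_5))
      )
  have ev2 := eval_unhelped (hexVtx 2) (hexVtx (2+1)) (({hexMid 0} : Set (ℝ × ℝ)) ∪ hexβ) hexSide_2 hfin (Set.mem_union_right _ ⟨2, rfl⟩) (Set.mem_union_right _ ⟨2 + 1, rfl⟩)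
    (by
      intro a ha
      rcases ha with h1 | ⟨i, rfl⟩
      · rw [Set.mem_singleton_iff] at h1
        exact Or.inr (Or.inr (h1 ▸ MB_2_0))
      · fin_cases i
        · exact Or.inr (Or.inr (VB_2_0))
        · exact Or.inr (Or.inr (VB_2_1))
        · exact Or.inl rfl
        · exact Or.inr (Or.inl rfl)
        · exact Or.inr (Or.inr (VB_2_4))
        · exact Or.inr (Or.inr (VB_2_5))
      )
  have ev3 := eval_unhelped (hexVtx 3) (hexVtx (3+1)) (({hexMid 0} : Set (ℝ × ℝ)) ∪ hexβ) hexSide_3 hfin (Set.mem_union_right _ ⟨3, rfl⟩) (Set.mem_union_right _ ⟨3 + 1, rfl⟩)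
    (by
      intro a ha
      rcases ha with h1 | ⟨i, rfl⟩
      · rw [Set.mem_singleton_iff] at h1
        exact Or.inr (Or.inr (h1 ▸ MB_3_0))
      · fin_cases i
        · exact Or.inr (Or.inr (VB_3_0))
        · exact Or.inr (Or.inr (VB_3_1))
        · exact Or.inr (Or.inr (VB_3_2))
        · exact Or.inl rfl
        · exact Or.inr (Or.inl rfl)
        · exact Or.inr (Or.inr (VB_3_5))
      )
  have ev4 := eval_unhelped (hexVtx 4) (hexVtx (4+1)) (({hexMid 0} : Set (ℝ × ℝ)) ∪ hexβ) hexSide_4 hfin (Set.mem_union_right _ ⟨4, rfl⟩) (Set.mem_union_right _ ⟨4 + 1, rfl⟩)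
    (by
      intro a ha
      rcases ha with h1 | ⟨i, rfl⟩
      · rw [Set.mem_singleton_iff] at h1
        exact Or.inr (Or.inr (h1 ▸ MB_4_0))
      · fin_cases i
        · exact Or.inr (Or.inr (VB_4_0))
        · exact Or.inr (Or.inr (VB_4_1))
        · exact Or.inr (Or.inr (VB_4_2))
        · exact Or.inr (Or.inr (VB_4_3))
        · exact Or.inl rfl
        · exact Or.inr (Or.inl rfl)
      )
  have ev5 := eval_unhelped (hexVtx 5) (hexVtx (5+1)) (({hexMid 0} : Set (ℝ × ℝ)) ∪ hexβ) hexSide_5 hfin (Set.mem_union_right _ ⟨5, rfl⟩) (Set.mem_union_right _ ⟨5 + 1, rfl⟩)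
    (by
      intro a ha
      rcases ha with h1 | ⟨i, rfl⟩
      · rw [Set.mem_singleton_iff] at h1
        exact Or.inr (Or.inr (h1 ▸ MB_5_0))
      · fin_cases i
        · exact Or.inr (Or.inl rfl)
        · exact Or.inr (Or.inr (VB_5_1))
        · exact Or.inr (Or.inr (VB_5_2))
        · exact Or.inr (Or.inr (VB_5_3))
        · exact Or.inr (Or.inr (VB_5_4))
        · exact Or.inl rfl
      )
  rw [hexError_eq, Fin.sum_univ_six, ev0, ev1, ev2, ev3, ev4, ev5]
  norm_num

lemma hexError_C8 : hexError (({hexMid 0, hexMid 3} : Set (ℝ × ℝ)) ∪ hexβ) = 1/16 := by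
  have hfin : (({hexMid 0, hexMid 3} : Set (ℝ × ℝ)) ∪ hexβ).Finite := (Set.toFinite _).union (Set.finite_range _)
  have ev0 := eval_helped (hexVtx 0) (hexVtx (0+1)) (({hexMid 0, hexMid 3} : Set (ℝ × ℝ)) ∪ hexβ) hexSide_0 hfin (Set.mem_union_right _ ⟨0, rfl⟩) (Set.mem_union_right _ ⟨0 + 1, rfl⟩) (Set.mem_union_left _ (by simp : hexMid 0 ∈ ({hexMid 0, hexMid 3} : Set (ℝ × ℝ))))
    (by
      intro a ha
      rcases ha with h1 | ⟨i, rfl⟩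
      · simp only [Set.mem_insert_iff, Set.mem_singleton_iff] at h1
        rcases h1 with h1 | h1
        · exact Or.inr (Or.inr (Or.inl h1))
        · exact Or.inr (Or.inr (Or.inr (h1 ▸ MB_0_3)))
      · fin_cases i
        · exact Or.inl rfl
        · exact Or.inr (Or.inl rfl)
        · exact Or.inr (Or.inr (Or.inr (VB_0_2)))
        · exact Or.inr (Or.inr (Or.inr (VB_0_3)))
        · exact Or.inr (Or.inr (Or.inr (VB_0_4)))
        · exact Or.inr (Or.inr (Or.inr (VB_0_5)))
      )
  have ev1 := eval_unhelped (hexVtx 1) (hexVtx (1+1)) (({hexMid 0, hexMid 3} : Set (ℝ × ℝ)) ∪ hexβ) hexSide_1 hfin (Set.mem_union_right _ ⟨1, rfl⟩) (Set.mem_union_right _ ⟨1 + 1, rfl⟩)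
    (by
      intro a ha
      rcases ha with h1 | ⟨i, rfl⟩
      · simp only [Set.mem_insert_iff, Set.mem_singleton_iff] at h1
        rcases h1 with h1 | h1
        · exact Or.inr (Or.inr (h1 ▸ MB_1_0))
        · exact Or.inr (Or.inr (h1 ▸ MB_1_3))
      · fin_cases i
        · exact Or.inr (Or.inr (VB_1_0))
        · exact Or.inl rfl
        · exact Or.inr (Or.inl rfl)
        · exact Or.inr (Or.inr (VB_1_3))
        · exact Or.inr (Or.inr (VB_1_4))
        · exact Or.inr (Or.inr (VB_1_5))
      )
  have ev2 := eval_unhelped (hexVtx 2) (hexVtx (2+1)) (({hexMid 0, hexMid 3} : Set (ℝ × ℝ)) ∪ hexβ) hexSide_2 hfin (Set.mem_union_right _ ⟨2, rfl⟩) (Set.mem_union_right _ ⟨2 + 1, rfl⟩)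
    (by
      intro a ha
      rcases ha with h1 | ⟨i, rfl⟩
      · simp only [Set.mem_insert_iff, Set.mem_singleton_iff] at h1
        rcases h1 with h1 | h1
        · exact Or.inr (Or.inr (h1 ▸ MB_2_0))
        · exact Or.inr (Or.inr (h1 ▸ MB_2_3))
      · fin_cases i
        · exact Or.inr (Or.inr (VB_2_0))
        · exact Or.inr (Or.inr (VB_2_1))
        · exact Or.inl rfl
        · exact Or.inr (Or.inl rfl)
        · exact Or.inr (Or.inr (VB_2_4))
        · exact Or.inr (Or.inr (VB_2_5))
      )
  have ev3 := eval_helped (hexVtx 3) (hexVtx (3+1)) (({hexMid 0, hexMid 3} : Set (ℝ × ℝ)) ∪ hexβ) hexSide_3 hfin (Set.mem_union_right _ ⟨3, rfl⟩) (Set.mem_union_right _ ⟨3 + 1, rfl⟩) (Set.mem_union_left _ (by simp : hexMid 3 ∈ ({hexMid 0, hexMid 3} : Set (ℝ × ℝ))))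
    (by
      intro a ha
      rcases ha with h1 | ⟨i, rfl⟩
      · simp only [Set.mem_insert_iff, Set.mem_singleton_iff] at h1
        rcases h1 with h1 | h1
        · exact Or.inr (Or.inr (Or.inr (h1 ▸ MB_3_0)))
        · exact Or.inr (Or.inr (Or.inl h1))
      · fin_cases i
        · exact Or.inr (Or.inr (Or.inr (VB_3_0)))
        · exact Or.inr (Or.inr (Or.inr (VB_3_1)))
        · exact Or.inr (Or.inr (Or.inr (VB_3_2)))
        · exact Or.inl rfl
        · exact Or.inr (Or.inl rfl)
        · exact Or.inr (Or.inr (Or.inr (VB_3_5)))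
      )
  have ev4 := eval_unhelped (hexVtx 4) (hexVtx (4+1)) (({hexMid 0, hexMid 3} : Set (ℝ × ℝ)) ∪ hexβ) hexSide_4 hfin (Set.mem_union_right _ ⟨4, rfl⟩) (Set.mem_union_right _ ⟨4 + 1, rfl⟩)
    (by
      intro a ha
      rcases ha with h1 | ⟨i, rfl⟩
      · simp only [Set.mem_insert_iff, Set.mem_singleton_iff] at h1
        rcases h1 with h1 | h1
        · exact Or.inr (Or.inr (h1 ▸ MB_4_0))
        · exact Or.inr (Or.inr (h1 ▸ MB_4_3))
      · fin_cases i
        · exact Or.inr (Or.inr (VB_4_0))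
        · exact Or.inr (Or.inr (VB_4_1))
        · exact Or.inr (Or.inr (VB_4_2))
        · exact Or.inr (Or.inr (VB_4_3))
        · exact Or.inl rfl
        · exact Or.inr (Or.inl rfl)
      )
  have ev5 := eval_unhelped (hexVtx 5) (hexVtx (5+1)) (({hexMid 0, hexMid 3} : Set (ℝ × ℝ)) ∪ hexβ) hexSide_5 hfin (Set.mem_union_right _ ⟨5, rfl⟩) (Set.mem_union_right _ ⟨5 + 1, rfl⟩)
    (by
      intro a ha
      rcases ha with h1 | ⟨i, rfl⟩
      · simp only [Set.mem_insert_iff, Set.mem_singleton_iff] at h1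
        rcases h1 with h1 | h1
        · exact Or.inr (Or.inr (h1 ▸ MB_5_0))
        · exact Or.inr (Or.inr (h1 ▸ MB_5_3))
      · fin_cases i
        · exact Or.inr (Or.inl rfl)
        · exact Or.inr (Or.inr (VB_5_1))
        · exact Or.inr (Or.inr (VB_5_2))
        · exact Or.inr (Or.inr (VB_5_3))
        · exact Or.inr (Or.inr (VB_5_4))
        · exact Or.inl rfl
      )
  rw [hexError_eq, Fin.sum_univ_six, ev0, ev1, ev2, ev3, ev4, ev5]
  norm_num

lemma hexError_C9 : hexError (({hexMid 0, hexMid 1, hexMid 3} : Set (ℝ × ℝ)) ∪ hexβ) = 5/96 := by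
  have hfin : (({hexMid 0, hexMid 1, hexMid 3} : Set (ℝ × ℝ)) ∪ hexβ).Finite := (Set.toFinite _).union (Set.finite_range _)
  have ev0 := eval_helped (hexVtx 0) (hexVtx (0+1)) (({hexMid 0, hexMid 1, hexMid 3} : Set (ℝ × ℝ)) ∪ hexβ) hexSide_0 hfin (Set.mem_union_right _ ⟨0, rfl⟩) (Set.mem_union_right _ ⟨0 + 1, rfl⟩) (Set.mem_union_left _ (by simp : hexMid 0 ∈ ({hexMid 0, hexMid 1, hexMid 3} : Set (ℝ × ℝ))))
    (by
      intro a ha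
      rcases ha with h1 | ⟨i, rfl⟩
      · simp only [Set.mem_insert_iff, Set.mem_singleton_iff] at h1
        rcases h1 with h1 | h1 | h1
        · exact Or.inr (Or.inr (Or.inl h1))
        · exact Or.inr (Or.inr (Or.inr (h1 ▸ MB_0_1)))
        · exact Or.inr (Or.inr (Or.inr (h1 ▸ MB_0_3)))
      · fin_cases i
        · exact Or.inl rfl
        · exact Or.inr (Or.inl rfl)
        · exact Or.inr (Or.inr (Or.inr (VB_0_2)))
        · exact Or.inr (Or.inr (Or.inr (VB_0_3)))
        · exact Or.inr (Or.inr (Or.inr (VB_0_4)))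
        · exact Or.inr (Or.inr (Or.inr (VB_0_5)))
      )
  have ev1 := eval_helped (hexVtx 1) (hexVtx (1+1)) (({hexMid 0, hexMid 1, hexMid 3} : Set (ℝ × ℝ)) ∪ hexβ) hexSide_1 hfin (Set.mem_union_right _ ⟨1, rfl⟩) (Set.mem_union_right _ ⟨1 + 1, rfl⟩) (Set.mem_union_left _ (by simp : hexMid 1 ∈ ({hexMid 0, hexMid 1, hexMid 3} : Set (ℝ × ℝ))))
    (by
      intro a ha
      rcases ha with h1 | ⟨i, rfl⟩
      · simp only [Set.mem_insert_iff, Set.mem_singleton_iff] at h1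
        rcases h1 with h1 | h1 | h1
        · exact Or.inr (Or.inr (Or.inr (h1 ▸ MB_1_0)))
        · exact Or.inr (Or.inr (Or.inl h1))
        · exact Or.inr (Or.inr (Or.inr (h1 ▸ MB_1_3)))
      · fin_cases i
        · exact Or.inr (Or.inr (Or.inr (VB_1_0)))
        · exact Or.inl rfl
        · exact Or.inr (Or.inl rfl)
        · exact Or.inr (Or.inr (Or.inr (VB_1_3)))
        · exact Or.inr (Or.inr (Or.inr (VB_1_4)))
        · exact Or.inr (Or.inr (Or.inr (VB_1_5)))
      )
  have ev2 := eval_unhelped (hexVtx 2) (hexVtx (2+1)) (({hexMid 0, hexMid 1, hexMid 3} : Set (ℝ × ℝ)) ∪ hexβ) hexSide_2 hfin (Set.mem_union_right _ ⟨2, rfl⟩) (Set.mem_union_right _ ⟨2 + 1, rfl⟩)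
    (by
      intro a ha
      rcases ha with h1 | ⟨i, rfl⟩
      · simp only [Set.mem_insert_iff, Set.mem_singleton_iff] at h1
        rcases h1 with h1 | h1 | h1
        · exact Or.inr (Or.inr (h1 ▸ MB_2_0))
        · exact Or.inr (Or.inr (h1 ▸ MB_2_1))
        · exact Or.inr (Or.inr (h1 ▸ MB_2_3))
      · fin_cases i
        · exact Or.inr (Or.inr (VB_2_0))
        · exact Or.inr (Or.inr (VB_2_1))
        · exact Or.inl rfl
        · exact Or.inr (Or.inl rfl)
        · exact Or.inr (Or.inr (VB_2_4))
        · exact Or.inr (Or.inr (VB_2_5))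
      )
  have ev3 := eval_helped (hexVtx 3) (hexVtx (3+1)) (({hexMid 0, hexMid 1, hexMid 3} : Set (ℝ × ℝ)) ∪ hexβ) hexSide_3 hfin (Set.mem_union_right _ ⟨3, rfl⟩) (Set.mem_union_right _ ⟨3 + 1, rfl⟩) (Set.mem_union_left _ (by simp : hexMid 3 ∈ ({hexMid 0, hexMid 1, hexMid 3} : Set (ℝ × ℝ))))
    (by
      intro a ha
      rcases ha with h1 | ⟨i, rfl⟩
      · simp only [Set.mem_insert_iff, Set.mem_singleton_iff] at h1
        rcases h1 with h1 | h1 | h1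
        · exact Or.inr (Or.inr (Or.inr (h1 ▸ MB_3_0)))
        · exact Or.inr (Or.inr (Or.inr (h1 ▸ MB_3_1)))
        · exact Or.inr (Or.inr (Or.inl h1))
      · fin_cases i
        · exact Or.inr (Or.inr (Or.inr (VB_3_0)))
        · exact Or.inr (Or.inr (Or.inr (VB_3_1)))
        · exact Or.inr (Or.inr (Or.inr (VB_3_2)))
        · exact Or.inl rfl
        · exact Or.inr (Or.inl rfl)
        · exact Or.inr (Or.inr (Or.inr (VB_3_5)))
      )
  have ev4 := eval_unhelped (hexVtx 4) (hexVtx (4+1)) (({hexMid 0, hexMid 1, hexMid 3} : Set (ℝ × ℝ)) ∪ hexβ) hexSide_4 hfin (Set.mem_union_right _ ⟨4, rfl⟩) (Set.mem_union_right _ ⟨4 + 1, rfl⟩)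
    (by
      intro a ha
      rcases ha with h1 | ⟨i, rfl⟩
      · simp only [Set.mem_insert_iff, Set.mem_singleton_iff] at h1
        rcases h1 with h1 | h1 | h1
        · exact Or.inr (Or.inr (h1 ▸ MB_4_0))
        · exact Or.inr (Or.inr (h1 ▸ MB_4_1))
        · exact Or.inr (Or.inr (h1 ▸ MB_4_3))
      · fin_cases i
        · exact Or.inr (Or.inr (VB_4_0))
        · exact Or.inr (Or.inr (VB_4_1))
        · exact Or.inr (Or.inr (VB_4_2))
        · exact Or.inr (Or.inr (VB_4_3))
        · exact Or.inl rfl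
        · exact Or.inr (Or.inl rfl)
      )
  have ev5 := eval_unhelped (hexVtx 5) (hexVtx (5+1)) (({hexMid 0, hexMid 1, hexMid 3} : Set (ℝ × ℝ)) ∪ hexβ) hexSide_5 hfin (Set.mem_union_right _ ⟨5, rfl⟩) (Set.mem_union_right _ ⟨5 + 1, rfl⟩)
    (by
      intro a ha
      rcases ha with h1 | ⟨i, rfl⟩
      · simp only [Set.mem_insert_iff, Set.mem_singleton_iff] at h1
        rcases h1 with h1 | h1 | h1
        · exact Or.inr (Or.inr (h1 ▸ MB_5_0))
        · exact Or.inr (Or.inr (h1 ▸ MB_5_1))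
        · exact Or.inr (Or.inr (h1 ▸ MB_5_3))
      · fin_cases i
        · exact Or.inr (Or.inl rfl)
        · exact Or.inr (Or.inr (VB_5_1))
        · exact Or.inr (Or.inr (VB_5_2))
        · exact Or.inr (Or.inr (VB_5_3))
        · exact Or.inr (Or.inr (VB_5_4))
        · exact Or.inl rfl
      )
  rw [hexError_eq, Fin.sum_univ_six, ev0, ev1, ev2, ev3, ev4, ev5]
  norm_num

lemma condV_eq (n k : ℕ) (hnk : n - 6 = k) (αc : Set (ℝ × ℝ)) (hfc : αc.Finite)
    (hcard : αc.ncard ≤ k) (hval : hexError (αc ∪ hexβ) = 1/12 - (k : ℝ)/96) :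
    condV n = 1/12 - (k : ℝ)/96 := by
  have lb : ∀ y ∈ ((fun α : Set (ℝ × ℝ) => hexError (α ∪ hexβ)) ''
      {α : Set (ℝ × ℝ) | α.Finite ∧ α.ncard ≤ n - 6}), 1/12 - (k : ℝ)/96 ≤ y := by
    rintro y ⟨α, ⟨hf, hc⟩, rfl⟩
    have h := hexError_lower α hf
    have hcc : hf.toFinset.card = α.ncard := (Set.ncard_eq_toFinset_card _ hf).symm
    have hk2 : α.ncard ≤ k := hnk ▸ hc
    have : (hf.toFinset.card : ℝ) ≤ (k : ℝ) := by
      rw [hcc]; exact_mod_cast hk2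
    linarith
  have hmem : hexError (αc ∪ hexβ) ∈ ((fun α : Set (ℝ × ℝ) => hexError (α ∪ hexβ)) ''
      {α : Set (ℝ × ℝ) | α.Finite ∧ α.ncard ≤ n - 6}) :=
    ⟨αc, ⟨hfc, hnk ▸ hcard⟩, rfl⟩
  apply le_antisymm
  · rw [← hval] at *
    exact csInf_le ⟨_, lb⟩ hmem
  · exact le_csInf ⟨_, hmem⟩ lb


/-- The conditional quantization errors for the uniform distribution on the regular hexagon
with the six vertices as conditional set: `V₆ = 1/12`, `V₇ = 7/96`, `V₈ = 1/16`, `V₉ = 5/96`. -/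
theorem hexagon_conditional_errors :
    condV 6 = 1 / 12 ∧ condV 7 = 7 / 96 ∧ condV 8 = 1 / 16 ∧ condV 9 = 5 / 96 := by
  refine ⟨?_, ?_, ?_, ?_⟩
  · have h := condV_eq 6 0 (by norm_num) ∅ (Set.finite_empty) (by simp)
      (by rw [Set.empty_union, hexError_C6]; norm_num)
    rw [h]; norm_num
  · have h := condV_eq 7 1 (by norm_num) {hexMid 0} (Set.finite_singleton _)
      (by simp) (by rw [hexError_C7]; norm_num)
    rw [h]; norm_num
  · have h := condV_eq 8 2 (by norm_num) {hexMid 0, hexMid 3} (Set.toFinite _)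
      (le_trans (Set.ncard_insert_le _ _) (by simp)) (by rw [hexError_C8]; norm_num)
    rw [h]; norm_num
  · have h := condV_eq 9 3 (by norm_num) {hexMid 0, hexMid 1, hexMid 3} (Set.toFinite _)
      (le_trans (Set.ncard_insert_le _ _) (by
        have := Set.ncard_insert_le (hexMid 1) ({hexMid 3} : Set (ℝ × ℝ))
        simp at this ⊢
        omega))
      (by rw [hexError_C9]; norm_num)
    rw [h]; norm_num
end
end

section
/- Let V_n = 2 sin³(π/k)/(3ℓ²) for kℓ ≤ n < k(ℓ+1) be bounded via V_{k(ℓ+1)} ≤ V_n ≤ V_{kℓ}, where V_{kℓ} = 2 sin³(π/k)/(3ℓ²). Then lim_{n→∞} 2 log n / (−log V_n) = 1. -/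
open Real Filter

/-- If `V` is nonincreasing with `V (k·m) = 2 sin³(π/k)/(3m²)` for all `m ≥ 1`, then
`2 log n / (− log V_n) → 1`: the conditional quantization dimension equals `1`. -/
theorem conditional_quantization_dimension (k : ℕ) (hk : 3 ≤ k) (V : ℕ → ℝ)
    (hanti : Antitone V)
    (hV : ∀ m : ℕ, 0 < m → V (k * m) = 2 * Real.sin (π / k) ^ 3 / (3 * (m : ℝ) ^ 2)) :
    Tendsto (fun n : ℕ => 2 * Real.log n / (-Real.log (V n))) atTop (nhds 1) := by
  have hk0 : 0 < k := by omega
  have hkR : (3 : ℝ) ≤ (k : ℝ) := by exact_mod_cast hk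
  have hspos : 0 < Real.sin (π / k) := by
    apply Real.sin_pos_of_pos_of_lt_pi
    · positivity
    · exact div_lt_self Real.pi_pos (by linarith)
  set C : ℝ := 2 * Real.sin (π / k) ^ 3 / 3 with hCdef
  have hCpos : 0 < C := by positivity
  -- value of V at multiples of k, in terms of C
  have hVC : ∀ m : ℕ, 0 < m → V (k * m) = C / (m : ℝ) ^ 2 := by
    intro m hm
    rw [hV m hm, hCdef]
    ring
  have hlogVC : ∀ m : ℕ, 0 < m → Real.log (V (k * m)) = Real.log C - 2 * Real.log m := by
    intro m hm
    have hmR : (0 : ℝ) < (m : ℝ) := by exact_mod_cast hm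
    rw [hVC m hm, Real.log_div hCpos.ne' (by positivity), Real.log_pow]
    push_cast
    ring
  -- key two-sided estimate
  have key : ∀ n : ℕ, k ≤ n →
      2 * Real.log n - (2 * Real.log (2 * k) + Real.log C) ≤ -Real.log (V n) ∧
      -Real.log (V n) ≤ 2 * Real.log n - Real.log C := by
    intro n hn
    set m := n / k with hm
    have hm1 : 1 ≤ m := (Nat.one_le_div_iff hk0).mpr hn
    have h1 : k * m ≤ n := by
      rw [mul_comm]; exact Nat.div_mul_le_self n k
    have h2 : n < k * (m + 1) := by
      have := (Nat.div_lt_iff_lt_mul hk0).mp (Nat.lt_succ_self m)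
      simpa [mul_comm, Nat.succ_eq_add_one] using this
    have hmR : (1 : ℝ) ≤ (m : ℝ) := by exact_mod_cast hm1
    have hnR : (1 : ℝ) ≤ (n : ℝ) := by
      have : 1 ≤ n := le_trans (by omega) hn
      exact_mod_cast this
    -- positivity of V n
    have hVn_pos : 0 < V n := by
      have hle : V (k * (m + 1)) ≤ V n := hanti h2.le
      have : V (k * (m + 1)) = C / ((m : ℝ) + 1) ^ 2 := by
        rw [hVC (m + 1) (by omega)]; push_cast; ring_nf
      nlinarith [hle, this, hCpos, sq_nonneg ((m : ℝ) + 1), div_pos hCpos (by positivity : (0:ℝ) < ((m : ℝ) + 1) ^ 2)]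
    constructor
    · -- lower bound: V n ≤ V (k*m)
      have hle : V n ≤ V (k * m) := hanti h1
      have hlog : Real.log (V n) ≤ Real.log C - 2 * Real.log m := by
        rw [← hlogVC m (by omega)]
        exact Real.log_le_log hVn_pos hle
      -- log n ≤ log (2k) + log m  since n ≤ 2*k*m
      have hn2km : (n : ℝ) ≤ 2 * k * m := by
        have : n ≤ 2 * k * m := by nlinarith [h2, hm1]
        exact_mod_cast this
      have hlogn : Real.log n ≤ Real.log (2 * k) + Real.log m := by
        have := Real.log_le_log (by linarith : (0 : ℝ) < n) hn2km
        rwa [show (2 * (k : ℝ) * m) = (2 * k) * m by ring,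
          Real.log_mul (by positivity) (by linarith)] at this
      linarith
    · -- upper bound: V (k*(m+1)) ≤ V n
      have hle : V (k * (m + 1)) ≤ V n := hanti h2.le
      have hlog : Real.log C - 2 * Real.log ((m : ℝ) + 1) ≤ Real.log (V n) := by
        have := hlogVC (m + 1) (by omega)
        push_cast at this
        rw [← this]
        exact Real.log_le_log (by
          rw [hVC (m + 1) (by omega)]
          push_cast
          positivity) hle
      have hm1n : ((m : ℝ) + 1) ≤ n := by
        have : m + 1 ≤ n := by nlinarith [h1, hm1, hk]
        exact_mod_cast this
      have hlogm : Real.log ((m : ℝ) + 1) ≤ Real.log n :=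
        Real.log_le_log (by linarith) hm1n
      linarith
  -- notation
  set f : ℕ → ℝ := fun n => -Real.log (V n) with hf
  set g : ℕ → ℝ := fun n => 2 * Real.log n with hg
  set B : ℝ := 2 * Real.log (2 * k) + |Real.log C| with hB
  have hlog2k : 0 ≤ Real.log (2 * k) := by
    apply Real.log_nonneg
    have : (1 : ℝ) ≤ (k : ℝ) := by linarith
    linarith
  have hbound : ∀ n : ℕ, k ≤ n → |f n - g n| ≤ B := by
    intro n hn
    obtain ⟨hl, hu⟩ := key n hn
    rw [abs_le]
    constructor
    · have := le_abs_self (Real.log C)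
      simp only [hf, hg, hB]
      linarith
    · have := neg_abs_le (Real.log C)
      simp only [hf, hg, hB]
      linarith
  have hgtop : Tendsto g atTop atTop := by
    exact (Real.tendsto_log_atTop.comp tendsto_natCast_atTop_atTop).const_mul_atTop two_pos
  -- (f - g)/g → 0
  have h0 : Tendsto (fun n => (f n - g n) / g n) atTop (nhds 0) := by
    apply squeeze_zero_norm' (a := fun n => B / g n)
    · filter_upwards [eventually_ge_atTop k, hgtop.eventually_gt_atTop 0] with n hn hgn
      rw [Real.norm_eq_abs, abs_div, abs_of_pos hgn]
      gcongr
      exact hbound n hn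
    · exact Tendsto.div_atTop tendsto_const_nhds hgtop
  -- f/g → 1
  have h1 : Tendsto (fun n => f n / g n) atTop (nhds 1) := by
    have := h0.const_add (1 : ℝ)
    rw [add_zero] at this
    apply this.congr'
    filter_upwards [hgtop.eventually_gt_atTop 0] with n hgn
    field_simp
    ring
  -- conclude
  have h2 := h1.inv₀ one_ne_zero
  simp only [inv_div, inv_one] at h2
  exact h2
end

section
/- With V_{km} = 2 sin³(π/k)/(3m²) for all m ∈ ℕ and V_n nonincreasing in n, the limit lim_{n→∞} n² V_n exists and equals (2/3) k² sin³(π/k). -/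
open Real Filter

/-- If `V` is nonincreasing with `V (k·m) = 2 sin³(π/k)/(3m²)` for all `m ≥ 1`, then
`n² V_n → (2/3) k² sin³(π/k)`: the `1`-dimensional conditional quantization coefficient
equals `(2/3) k² sin³(π/k)`. -/
theorem conditional_quantization_coefficient (k : ℕ) (hk : 3 ≤ k) (V : ℕ → ℝ)
    (hanti : Antitone V)
    (hV : ∀ m : ℕ, 0 < m → V (k * m) = 2 * Real.sin (π / k) ^ 3 / (3 * (m : ℝ) ^ 2)) :
    Tendsto (fun n : ℕ => (n : ℝ) ^ 2 * V n) atTop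
      (nhds ((2 / 3) * (k : ℝ) ^ 2 * Real.sin (π / k) ^ 3)) := by
  have hk0 : 0 < k := by omega
  have hk1 : (1 : ℝ) < (k : ℝ) := by exact_mod_cast by omega
  have hsin : 0 < Real.sin (π / k) := by
    apply Real.sin_pos_of_pos_of_lt_pi
    · positivity
    · exact div_lt_self Real.pi_pos hk1
  set c : ℝ := 2 * Real.sin (π / k) ^ 3 / 3 with hc
  have hc0 : 0 < c := by positivity
  have hkey : (2 / 3) * (k : ℝ) ^ 2 * Real.sin (π / k) ^ 3 = c * (k : ℝ) ^ 2 := by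
    rw [hc]; ring
  rw [hkey]
  -- m(n) = n / k tends to atTop
  have hmtop : Tendsto (fun n : ℕ => n / k) atTop atTop := by
    apply tendsto_atTop_atTop.2
    intro b
    refine ⟨b * k, fun n hn => ?_⟩
    calc b = b * k / k := (Nat.mul_div_cancel b hk0).symm
    _ ≤ n / k := Nat.div_le_div_right hn
  -- lower limit
  have h1 : Tendsto (fun m : ℕ => (m : ℝ) / (m + 1)) atTop (nhds 1) :=
    tendsto_natCast_div_add_atTop (1 : ℝ)
  have h2 : Tendsto (fun m : ℕ => ((m : ℝ) + 1) / m) atTop (nhds 1) := by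
    have hbase : Tendsto (fun m : ℕ => 1 + 1 / (m : ℝ)) atTop (nhds 1) := by
      simpa using (tendsto_const_nhds : Tendsto (fun _ : ℕ => (1 : ℝ)) atTop (nhds 1)).add tendsto_one_div_atTop_nhds_zero_nat
    apply hbase.congr'
    filter_upwards [eventually_ge_atTop 1] with m hm
    have hm0 : (m : ℝ) ≠ 0 := by positivity
    field_simp
  have hL : Tendsto (fun n : ℕ => c * (k : ℝ) ^ 2 * ((↑(n / k) : ℝ) / (↑(n / k) + 1)) ^ 2)
      atTop (nhds (c * (k : ℝ) ^ 2)) := by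
    have := ((h1.pow 2).const_mul (c * (k : ℝ) ^ 2)).comp hmtop
    rw [one_pow, mul_one] at this
    exact this
  have hU : Tendsto (fun n : ℕ => c * (k : ℝ) ^ 2 * (((↑(n / k) : ℝ) + 1) / (↑(n / k))) ^ 2)
      atTop (nhds (c * (k : ℝ) ^ 2)) := by
    have := ((h2.pow 2).const_mul (c * (k : ℝ) ^ 2)).comp hmtop
    rw [one_pow, mul_one] at this
    exact this
  refine tendsto_of_tendsto_of_tendsto_of_le_of_le' hL hU ?_ ?_
  · -- lower bound
    filter_upwards [eventually_ge_atTop k] with n hn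
    set m : ℕ := n / k with hm
    have hm1 : 1 ≤ m := (Nat.one_le_div_iff hk0).2 hn
    have hlow : k * m ≤ n := by
      rw [hm, mul_comm]; exact Nat.div_mul_le_self n k
    have hhigh : n ≤ k * (m + 1) := by
      have h3 : n / k < m + 1 := by omega
      have h4 := (Nat.div_lt_iff_lt_mul hk0).1 h3
      calc n ≤ (m + 1) * k := h4.le
        _ = k * (m + 1) := by ring
    have hVlow : V (k * (m + 1)) ≤ V n := hanti hhigh
    have hne : ((m : ℝ) + 1) ≠ 0 := by positivity
    have hVval : V (k * (m + 1)) = c / ((m : ℝ) + 1) ^ 2 := by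
      rw [hV (m + 1) (by omega), hc]
      push_cast
      field_simp
    have hM0 : (0 : ℝ) < (m : ℝ) := by exact_mod_cast hm1
    have hcast : (k : ℝ) * (m : ℝ) ≤ (n : ℝ) := by exact_mod_cast hlow
    calc c * (k : ℝ) ^ 2 * ((m : ℝ) / ((m : ℝ) + 1)) ^ 2
        = c * ((k : ℝ) * (m : ℝ)) ^ 2 / ((m : ℝ) + 1) ^ 2 := by
          field_simp
      _ ≤ c * (n : ℝ) ^ 2 / ((m : ℝ) + 1) ^ 2 := by gcongr
      _ = (n : ℝ) ^ 2 * (c / ((m : ℝ) + 1) ^ 2) := by ring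
      _ ≤ (n : ℝ) ^ 2 * V n := by
          apply mul_le_mul_of_nonneg_left _ (by positivity)
          rw [← hVval]; exact hVlow
  · -- upper bound
    filter_upwards [eventually_ge_atTop k] with n hn
    set m : ℕ := n / k with hm
    have hm1 : 1 ≤ m := (Nat.one_le_div_iff hk0).2 hn
    have hlow : k * m ≤ n := by
      rw [hm, mul_comm]; exact Nat.div_mul_le_self n k
    have hhigh : n ≤ k * (m + 1) := by
      have h3 : n / k < m + 1 := by omega
      have h4 := (Nat.div_lt_iff_lt_mul hk0).1 h3
      calc n ≤ (m + 1) * k := h4.le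
        _ = k * (m + 1) := by ring
    have hVup : V n ≤ V (k * m) := hanti hlow
    have hM0 : (0 : ℝ) < (m : ℝ) := by exact_mod_cast hm1
    have hVval : V (k * m) = c / (m : ℝ) ^ 2 := by
      rw [hV m (by omega), hc]
      field_simp
    have hcast : (n : ℝ) ≤ (k : ℝ) * ((m : ℝ) + 1) := by exact_mod_cast hhigh
    calc (n : ℝ) ^ 2 * V n
        ≤ (n : ℝ) ^ 2 * V (k * m) := by
          apply mul_le_mul_of_nonneg_left hVup (by positivity)
      _ = (n : ℝ) ^ 2 * (c / (m : ℝ) ^ 2) := by rw [hVval]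
      _ ≤ ((k : ℝ) * ((m : ℝ) + 1)) ^ 2 * (c / (m : ℝ) ^ 2) := by
          gcongr
      _ = c * (k : ℝ) ^ 2 * (((m : ℝ) + 1) / (m : ℝ)) ^ 2 := by
          field_simp
end

section
/- For the uniform distribution on the side L_1 = {(x, −√3/2) : −1/2 ≤ x ≤ 1/2} of the regular hexagon with density 1/6 per unit length, the distortion error of the three-point set {(−1/2, −√3/2), (0, −1), (1/2, −√3/2)} (where (0, −1) is on the circumcircle, and Voronoi boundaries on L_1 are determined by perpendicular bisectors) equals √3/2 − 31/36. -/
set_option maxHeartbeats 800000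


open Real

/-- For the uniform distribution (density `1/6`) on the bottom side
`L₁ = {(x, −√3/2) : −1/2 ≤ x ≤ 1/2}` of the regular hexagon, the distortion error of the
three-point set `{(−1/2, −√3/2), (0, −1), (1/2, −√3/2)}` equals `√3/2 − 31/36`. -/
theorem hexagon_side_three_point_distortion :
    (1 / 6 : ℝ) *
      ∫ x in (-(1 / 2) : ℝ)..(1 / 2 : ℝ),
        min (min ((x + 1 / 2) ^ 2 + ((-(Real.sqrt 3 / 2)) - (-(Real.sqrt 3 / 2))) ^ 2)
              (x ^ 2 + ((-(Real.sqrt 3 / 2)) - (-1)) ^ 2))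
          ((x - 1 / 2) ^ 2 + ((-(Real.sqrt 3 / 2)) - (-(Real.sqrt 3 / 2))) ^ 2)
    = Real.sqrt 3 / 2 - 31 / 36 := by
  set s : ℝ := Real.sqrt 3 with hsdef
  have hs : s ^ 2 = 3 := Real.sq_sqrt (by norm_num)
  have hs0 : 0 ≤ s := Real.sqrt_nonneg 3
  have hs1 : (3 / 2 : ℝ) < s := by nlinarith
  have hs2 : s < 2 := by nlinarith
  set c : ℝ := ((-(s / 2)) - (-1)) ^ 2 with hcdef
  set F : ℝ → ℝ := fun x =>
    min (min ((x + 1 / 2) ^ 2 + ((-(s / 2)) - (-(s / 2))) ^ 2) (x ^ 2 + c))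
      ((x - 1 / 2) ^ 2 + ((-(s / 2)) - (-(s / 2))) ^ 2) with hFdef
  have hc : c = (1 - s / 2) ^ 2 := by rw [hcdef]; ring
  have hFcont : Continuous F := by
    apply Continuous.min
    · apply Continuous.min <;> continuity
    · continuity
  set a : ℝ := 3 / 2 - s with hadef
  set b : ℝ := s - 3 / 2 with hbdef
  have hab : a ≤ b := by simp [hadef, hbdef]; linarith
  have ha : (-(1/2) : ℝ) ≤ a := by simp [hadef]; linarith
  have hb : b ≤ (1/2 : ℝ) := by simp [hbdef]; linarith
  -- split integral
  have hint : ∀ u v : ℝ, IntervalIntegrable F MeasureTheory.volume u v :=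
    fun u v => hFcont.intervalIntegrable u v
  have hsplit : ∫ x in (-(1/2) : ℝ)..(1/2 : ℝ), F x
      = (∫ x in (-(1/2) : ℝ)..a, F x) + (∫ x in a..b, F x) + (∫ x in b..(1/2 : ℝ), F x) := by
    rw [intervalIntegral.integral_add_adjacent_intervals (hint _ a) (hint a _),
      intervalIntegral.integral_add_adjacent_intervals (hint _ b) (hint b _)]
  -- evaluate F on each piece
  have hleft : ∫ x in (-(1/2) : ℝ)..a, F x = ∫ x in (-(1/2) : ℝ)..a, (x + 1/2) ^ 2 := by
    apply intervalIntegral.integral_congr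
    intro x hx
    rw [Set.uIcc_of_le ha] at hx
    obtain ⟨hx1, hx2⟩ := hx
    rw [hadef] at hx2
    have h1 : (x + 1/2) ^ 2 + ((-(s / 2)) - (-(s / 2))) ^ 2 ≤ x ^ 2 + c := by
      rw [hc]; nlinarith
    have h2 : (x + 1/2) ^ 2 + ((-(s / 2)) - (-(s / 2))) ^ 2
        ≤ (x - 1/2) ^ 2 + ((-(s / 2)) - (-(s / 2))) ^ 2 := by nlinarith
    simp only [hFdef, min_eq_left h1, min_eq_left h2]
    ring
  have hright : ∫ x in b..(1/2 : ℝ), F x = ∫ x in b..(1/2 : ℝ), (x - 1/2) ^ 2 := by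
    apply intervalIntegral.integral_congr
    intro x hx
    rw [Set.uIcc_of_le hb] at hx
    obtain ⟨hx1, hx2⟩ := hx
    rw [hbdef] at hx1
    have h1 : (x - 1/2) ^ 2 + ((-(s / 2)) - (-(s / 2))) ^ 2 ≤ x ^ 2 + c := by
      rw [hc]; nlinarith
    have h2 : (x - 1/2) ^ 2 + ((-(s / 2)) - (-(s / 2))) ^ 2
        ≤ (x + 1/2) ^ 2 + ((-(s / 2)) - (-(s / 2))) ^ 2 := by nlinarith
    simp only [hFdef, min_eq_right (le_min h2 h1)]
    ring
  have hmid : ∫ x in a..b, F x = ∫ x in a..b, (x ^ 2 + c) := by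
    apply intervalIntegral.integral_congr
    intro x hx
    rw [Set.uIcc_of_le hab] at hx
    obtain ⟨hx1, hx2⟩ := hx
    rw [hadef] at hx1
    rw [hbdef] at hx2
    have h1 : x ^ 2 + c ≤ (x + 1/2) ^ 2 + ((-(s / 2)) - (-(s / 2))) ^ 2 := by
      rw [hc]; nlinarith
    have h2 : x ^ 2 + c ≤ (x - 1/2) ^ 2 + ((-(s / 2)) - (-(s / 2))) ^ 2 := by
      rw [hc]; nlinarith
    simp only [hFdef, min_eq_right h1, min_eq_left h2]
  -- evaluate the polynomial integrals
  have key : ∀ k u v : ℝ, ∫ x in u..v, (x + k) ^ 2 = ((v + k) ^ 3 - (u + k) ^ 3) / 3 := by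
    intro k u v
    rw [intervalIntegral.integral_comp_add_right (fun x => x ^ 2) k, integral_pow]
    norm_num
  have hL : ∫ x in (-(1/2) : ℝ)..a, (x + 1/2) ^ 2 = ((a + 1/2) ^ 3 - 0) / 3 := by
    rw [key]; norm_num
  have hR : ∫ x in b..(1/2 : ℝ), (x - 1/2) ^ 2 = (0 - (b - 1/2) ^ 3) / 3 := by
    have := key (-(1/2)) b (1/2)
    simp only [show ∀ x : ℝ, x + -(1/2) = x - 1/2 from fun x => by ring] at this
    rw [this]; norm_num
  have hM : ∫ x in a..b, (x ^ 2 + c) = (b ^ 3 - a ^ 3) / 3 + c * (b - a) := by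
    rw [intervalIntegral.integral_add ((continuous_pow 2).intervalIntegrable _ _)
      (intervalIntegrable_const), integral_pow, intervalIntegral.integral_const]
    simp only [smul_eq_mul]
    ring
  rw [hsplit, hleft, hright, hmid, hL, hR, hM, hadef, hbdef, hc]
  linear_combination (s / 12 - 7 / 24) * hs
end
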